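/- arXiv:1604.06931 — 4 statements merged into one kernel-verified Lean document; each statement's English description precedes it below -/
import Mathlib

section
/- Let n ≥ 1 and let Γ be a connected finite simple graph on vertex set V with |V| = n. For every k with 0 ≤ k ≤ n−1, the number of k-dimensional faces of the graphical zonotope Z_Γ equals the sum, over all flats F of Γ with rk(F) = k, of the number a(Γ/F) of acyclic orientations of the contraction Γ/F. -/
set_option linter.unusedSectionVars false
set_option linter.unusedVariables false
set_option linter.unreachableTactic false
set_option linter.unusedTactic false


open Polynomial

/-- The graphical zonotope of `G`, as the Minkowski sum over the edges `{i,j}` of `G`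
of the segments `[-(e_i - e_j), e_i - e_j]`, described via antisymmetric coefficient
functions supported on edges. -/
def graphicalZonotope {V : Type} [Fintype V] [DecidableEq V] (G : SimpleGraph V) :
    Set (V → ℝ) :=
  { x | ∃ c : V → V → ℝ, (∀ u v, c u v = - c v u) ∧ (∀ u v, ¬ G.Adj u v → c u v = 0) ∧
      (∀ u v, |c u v| ≤ 1) ∧ x = fun w => ∑ u, c w u }

/-- `faceCount G k` is the number of nonempty exposed faces of the graphical zonotope of `G`
whose affine span has dimension `k`. -/
noncomputable def faceCount {V : Type} [Fintype V] [DecidableEq V] (G : SimpleGraph V)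
    (k : ℕ) : ℕ :=
  Nat.card { F : Set (V → ℝ) // F.Nonempty ∧ IsExposed ℝ (graphicalZonotope G) F ∧
      Module.finrank ℝ (affineSpan ℝ F).direction = k }

/-- The number of acyclic orientations of `G`. -/
noncomputable def acyclicOrientationCount {V : Type} (G : SimpleGraph V) : ℕ :=
  Nat.card { r : V → V → Prop // (∀ u v, r u v → G.Adj u v) ∧
      (∀ u v, G.Adj u v → Xor' (r u v) (r v u)) ∧ (∀ v, ¬ Relation.TransGen r v v) }

/-- rank of the induced subgraph on `s` : `|s| - #components`. -/
noncomputable def inducedRank {V : Type} (G : SimpleGraph V) (s : Set V) : ℕ :=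
  Nat.card s - Nat.card (G.induce s).ConnectedComponent

/-- The `q`-analog of the chromatic polynomial evaluated at `d` colors, an element of `ℤ[q]`. -/
noncomputable def chromQ {V : Type} [Fintype V] [DecidableEq V] (G : SimpleGraph V) (d : ℕ) : Polynomial ℤ :=
  ∑ f : V → Fin d, (X : Polynomial ℤ) ^ (∑ i : Fin d, inducedRank G (f ⁻¹' {i}))

/-- `H` is (the spanning subgraph determined by) a flat of `G`. -/
def IsFlatOf {V : Type} (G H : SimpleGraph V) : Prop :=
  H ≤ G ∧ ∀ u v, G.Adj u v → H.Reachable u v → H.Adj u v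

/-- The rank of a spanning subgraph `H`: `|V| - c(H)`. -/
noncomputable def flatRank {V : Type} [Fintype V] (H : SimpleGraph V) : ℕ :=
  Fintype.card V - Nat.card H.ConnectedComponent

/-- The contraction `G/H`: vertices are the connected components of `H`, two distinct
components being adjacent iff some edge of `G` joins them. -/
def contractFlat {V : Type} (G H : SimpleGraph V) : SimpleGraph H.ConnectedComponent where
  Adj C D := C ≠ D ∧ ∃ u v, G.Adj u v ∧ H.connectedComponentMk u = C ∧
      H.connectedComponentMk v = D
  symm := ⟨by
    rintro C D ⟨hne, u, v, hadj, hu, hv⟩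
    exact ⟨hne.symm, v, u, hadj.symm, hv, hu⟩⟩
  loopless := ⟨by rintro C ⟨hne, -⟩; exact hne rfl⟩

namespace ZAux
attribute [local instance] Classical.propDecidable
variable {V : Type} [Fintype V] [DecidableEq V]

lemma zero_mem_zon (H : SimpleGraph V) : (0 : V → ℝ) ∈ graphicalZonotope H :=
  ⟨0, by simp, by simp, by simp, by funext w; simp⟩

lemma edge_mem_zon {H : SimpleGraph V} {u v : V} (h : H.Adj u v) :
    (Pi.single u 1 - Pi.single v 1 : V → ℝ) ∈ graphicalZonotope H := by
  have hne : u ≠ v := h.ne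
  refine ⟨fun a b => (if a = u ∧ b = v then 1 else 0) - (if a = v ∧ b = u then 1 else 0),
    ?_, ?_, ?_, ?_⟩
  · intro a b
    have e1 : (if b = u ∧ a = v then (1:ℝ) else 0) = (if a = v ∧ b = u then 1 else 0) :=
      if_congr and_comm rfl rfl
    have e2 : (if b = v ∧ a = u then (1:ℝ) else 0) = (if a = u ∧ b = v then 1 else 0) :=
      if_congr and_comm rfl rfl
    dsimp only; rw [e1, e2]; ring
  · rintro a b hab; dsimp only
    have h1 : ¬ (a = u ∧ b = v) := by rintro ⟨rfl, rfl⟩; exact hab h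
    have h2 : ¬ (a = v ∧ b = u) := by rintro ⟨rfl, rfl⟩; exact hab h.symm
    simp [h1, h2]
  · intro a b; dsimp only; split_ifs <;> norm_num
  · funext a
    rw [Finset.sum_sub_distrib]
    simp only [Pi.sub_apply, Pi.single_apply, ite_and]
    by_cases hau : a = u <;> by_cases hav : a = v <;>
      simp [hau, hav, Finset.sum_ite_eq']

def rowSum (c : V → V → ℝ) : V → ℝ := fun w => ∑ u, c w u
def IsCoef (G : SimpleGraph V) (c : V → V → ℝ) : Prop :=
  (∀ u v, c u v = - c v u) ∧ (∀ u v, ¬ G.Adj u v → c u v = 0) ∧ (∀ u v, |c u v| ≤ 1)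
lemma mem_zon {G : SimpleGraph V} {x : V → ℝ} :
    x ∈ graphicalZonotope G ↔ ∃ c, IsCoef G c ∧ x = rowSum c := by
  constructor
  · rintro ⟨c, h1, h2, h3, h4⟩; exact ⟨c, ⟨h1, h2, h3⟩, h4⟩
  · rintro ⟨c, ⟨h1, h2, h3⟩, h4⟩; exact ⟨c, h1, h2, h3, h4⟩
def wt (w : V → ℝ) (x : V → ℝ) : ℝ := ∑ v, w v * x v
noncomputable def wtL (w : V → ℝ) : (V → ℝ) →ₗ[ℝ] ℝ where
  toFun := wt w
  map_add' x y := by simp [wt, mul_add, Finset.sum_add_distrib]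
  map_smul' a x := by
    simp only [wt, RingHom.id_apply, smul_eq_mul, Pi.smul_apply, Finset.mul_sum]
    exact Finset.sum_congr rfl fun v _ => by ring

noncomputable def eW (G : SimpleGraph V) (w : V → ℝ) (u v : V) : ℝ :=
  if G.Adj u v then |w u - w v| else 0

lemma two_wt_rowSum {G : SimpleGraph V} {c : V → V → ℝ} (hc : IsCoef G c) (w : V → ℝ) :
    2 * wt w (rowSum c) = ∑ p : V × V, c p.1 p.2 * (w p.1 - w p.2) := by
  have hs : wt w (rowSum c) = ∑ p : V × V, w p.1 * c p.1 p.2 := by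
    rw [Fintype.sum_prod_type]
    simp [wt, rowSum, Finset.mul_sum]
  have hs2 : wt w (rowSum c) = - ∑ p : V × V, w p.2 * c p.1 p.2 := by
    rw [hs, ← Finset.sum_neg_distrib]
    rw [← Equiv.sum_comp (Equiv.prodComm V V) (fun p => -(w p.2 * c p.1 p.2))]
    refine Finset.sum_congr rfl fun p _ => ?_
    simp [Equiv.prodComm, hc.1 p.1 p.2]
  have hsplit : (∑ p : V × V, c p.1 p.2 * (w p.1 - w p.2))
      = (∑ p : V × V, w p.1 * c p.1 p.2) - ∑ p : V × V, w p.2 * c p.1 p.2 := by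
    rw [← Finset.sum_sub_distrib]
    exact Finset.sum_congr rfl fun p _ => by ring
  linarith [hs, hs2, hsplit]

lemma term_le {G : SimpleGraph V} {c : V → V → ℝ} (hc : IsCoef G c) (w : V → ℝ) (u v : V) :
    c u v * (w u - w v) ≤ eW G w u v := by
  unfold eW
  by_cases h : G.Adj u v
  · rw [if_pos h]
    calc c u v * (w u - w v) ≤ |c u v * (w u - w v)| := le_abs_self _
      _ = |c u v| * |w u - w v| := abs_mul _ _
      _ ≤ 1 * |w u - w v| := by
          exact mul_le_mul_of_nonneg_right (hc.2.2 u v) (abs_nonneg _)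
      _ = |w u - w v| := one_mul _
  · rw [if_neg h, hc.2.1 u v h, zero_mul]

lemma cmax_isCoef (G : SimpleGraph V) (w : V → ℝ) :
    IsCoef G (fun u v => if G.Adj u v then (if w v < w u then 1 else if w u < w v then -1 else 0) else 0) := by
  refine ⟨fun u v => ?_, fun u v h => by simp [h], fun u v => ?_⟩
  · dsimp only
    by_cases h : G.Adj u v
    · rw [if_pos h, if_pos h.symm]
      rcases lt_trichotomy (w u) (w v) with h1 | h1 | h1
      · rw [if_neg (asymm h1), if_pos h1, if_pos h1]
      · rw [h1]; simp
      · rw [if_pos h1, if_neg (asymm h1), if_pos h1]; ring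
    · rw [if_neg h, if_neg (fun hh => h hh.symm)]; ring
  · dsimp only; split_ifs <;> norm_num

lemma cmax_term (G : SimpleGraph V) (w : V → ℝ) (u v : V) :
    (if G.Adj u v then (if w v < w u then (1:ℝ) else if w u < w v then -1 else 0) else 0) * (w u - w v)
      = eW G w u v := by
  unfold eW
  by_cases h : G.Adj u v
  · rw [if_pos h, if_pos h]
    rcases lt_trichotomy (w u) (w v) with h1 | h1 | h1
    · rw [if_neg (asymm h1), if_pos h1, abs_of_neg (by linarith : w u - w v < 0)]; ring
    · rw [h1]; simp
    · rw [if_pos h1, abs_of_pos (by linarith : (0:ℝ) < w u - w v)]; ring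
  · rw [if_neg h, if_neg h, zero_mul]

lemma forced_of_max {G : SimpleGraph V} {w x : V → ℝ} (hx : x ∈ graphicalZonotope G)
    (hmax : ∀ y ∈ graphicalZonotope G, wt w y ≤ wt w x)
    {c : V → V → ℝ} (hc : IsCoef G c) (hxc : x = rowSum c) :
    ∀ u v, c u v * (w u - w v) = eW G w u v := by
  set cm : V → V → ℝ := fun u v => if G.Adj u v then (if w v < w u then 1 else if w u < w v then -1 else 0) else 0 with hcm
  have h1 : wt w (rowSum cm) ≤ wt w x := hmax _ (mem_zon.2 ⟨cm, cmax_isCoef G w, rfl⟩)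
  have h2 : (∑ p : V × V, c p.1 p.2 * (w p.1 - w p.2)) = ∑ p : V × V, eW G w p.1 p.2 := by
    have hle : ∀ p : V × V, p ∈ Finset.univ → c p.1 p.2 * (w p.1 - w p.2) ≤ eW G w p.1 p.2 :=
      fun p _ => term_le hc w p.1 p.2
    have hge : (∑ p : V × V, eW G w p.1 p.2) ≤ ∑ p : V × V, c p.1 p.2 * (w p.1 - w p.2) := by
      have e1 : (∑ p : V × V, eW G w p.1 p.2) = 2 * wt w (rowSum cm) := by
        rw [two_wt_rowSum (cmax_isCoef G w) w]
        exact Finset.sum_congr rfl fun p _ => (cmax_term G w p.1 p.2).symm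
      have e2 : (∑ p : V × V, c p.1 p.2 * (w p.1 - w p.2)) = 2 * wt w x := by
        rw [hxc, two_wt_rowSum hc w]
      rw [e1, e2]; linarith
    have := Finset.sum_le_sum hle
    linarith
  intro u v
  have := (Finset.sum_eq_sum_iff_of_le (fun p (_ : p ∈ Finset.univ) => term_le hc w p.1 p.2)).1 h2
  exact this (u, v) (Finset.mem_univ _)

lemma max_of_forced {G : SimpleGraph V} {w : V → ℝ} {c : V → V → ℝ} (hc : IsCoef G c)
    (hf : ∀ u v, c u v * (w u - w v) = eW G w u v) :
    ∀ y ∈ graphicalZonotope G, wt w y ≤ wt w (rowSum c) := by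
  intro y hy
  obtain ⟨d, hd, rfl⟩ := mem_zon.1 hy
  have h1 : 2 * wt w (rowSum d) ≤ 2 * wt w (rowSum c) := by
    rw [two_wt_rowSum hd w, two_wt_rowSum hc w]
    refine Finset.sum_le_sum fun p _ => ?_
    rw [hf p.1 p.2]
    exact term_le hd w p.1 p.2
  linarith

def faceSet (G H : SimpleGraph V) (r : H.ConnectedComponent → H.ConnectedComponent → Prop) :
    Set (V → ℝ) :=
  { x | ∃ c, IsCoef G c ∧
      (∀ u v, G.Adj u v → r (H.connectedComponentMk u) (H.connectedComponentMk v) → c u v = 1) ∧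
      x = rowSum c }

def Compat (G : SimpleGraph V) (w : V → ℝ) (H : SimpleGraph V)
    (r : H.ConnectedComponent → H.ConnectedComponent → Prop) : Prop :=
  (∀ u v, H.Reachable u v → w u = w v) ∧
  (∀ u v, G.Adj u v →
    (w v < w u ↔ r (H.connectedComponentMk u) (H.connectedComponentMk v)))

/-- under compatibility, the forced-sign condition is equivalent to termwise maximality -/
lemma forced_iff_term {G H : SimpleGraph V} {r} {w : V → ℝ} (hcom : Compat G w H r)
    {c : V → V → ℝ} (hc : IsCoef G c) :
    (∀ u v, G.Adj u v → r (H.connectedComponentMk u) (H.connectedComponentMk v) → c u v = 1)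
      ↔ (∀ u v, c u v * (w u - w v) = eW G w u v) := by
  constructor
  · intro hfor u v
    unfold eW
    by_cases h : G.Adj u v
    · rw [if_pos h]
      rcases lt_trichotomy (w u) (w v) with h1 | h1 | h1
      · have : c v u = 1 := hfor v u h.symm (((hcom.2 v u h.symm)).1 h1)
        have hcuv : c u v = -1 := by rw [hc.1 u v, this]
        rw [hcuv, abs_of_neg (by linarith : w u - w v < 0)]; ring
      · rw [h1]; simp
      · have : c u v = 1 := hfor u v h ((hcom.2 u v h).1 h1)
        rw [this, abs_of_pos (by linarith : (0:ℝ) < w u - w v)]; ring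
    · rw [if_neg h, hc.2.1 u v h, zero_mul]
  · intro hterm u v hadj hr
    have h1 : w v < w u := (hcom.2 u v hadj).2 hr
    have := hterm u v
    rw [eW, if_pos hadj, abs_of_pos (by linarith : (0:ℝ) < w u - w v)] at this
    have hne : w u - w v ≠ 0 := by linarith
    exact mul_right_cancel₀ hne (by rw [this, one_mul])

lemma faceSet_eq_face {G H : SimpleGraph V} {r} {w : V → ℝ}
    (hcom : Compat G w H r) :
    faceSet G H r
      = { x ∈ graphicalZonotope G | ∀ y ∈ graphicalZonotope G, wt w y ≤ wt w x } := by
  ext x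
  constructor
  · rintro ⟨c, hc, hfor, rfl⟩
    refine ⟨mem_zon.2 ⟨c, hc, rfl⟩, max_of_forced hc ((forced_iff_term hcom hc).1 hfor)⟩
  · rintro ⟨hx, hmax⟩
    obtain ⟨c, hc, rfl⟩ := mem_zon.1 hx
    exact ⟨c, hc, (forced_iff_term hcom hc).2 (forced_of_max hx hmax hc rfl), rfl⟩

/-- every representation of a point of the face is forced -/
lemma forced_of_mem_face {G H : SimpleGraph V} {r} {w : V → ℝ} (hcom : Compat G w H r)
    {x : V → ℝ} (hx : x ∈ faceSet G H r) {c : V → V → ℝ} (hc : IsCoef G c)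
    (hxc : x = rowSum c) :
    ∀ u v, G.Adj u v → r (H.connectedComponentMk u) (H.connectedComponentMk v) → c u v = 1 := by
  rw [faceSet_eq_face hcom] at hx
  exact (forced_iff_term hcom hc).2 (forced_of_max hx.1 hx.2 hc hxc)

def IsOrient {α : Type} (G' : SimpleGraph α) (r : α → α → Prop) : Prop :=
  (∀ u v, r u v → G'.Adj u v) ∧ (∀ u v, G'.Adj u v → Xor' (r u v) (r v u)) ∧
  (∀ v, ¬ Relation.TransGen r v v)

noncomputable def c₀ (G H : SimpleGraph V)
    (r : H.ConnectedComponent → H.ConnectedComponent → Prop) : V → V → ℝ :=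
  fun u v =>
    if G.Adj u v ∧ r (H.connectedComponentMk u) (H.connectedComponentMk v) then 1
    else if G.Adj u v ∧ r (H.connectedComponentMk v) (H.connectedComponentMk u) then -1 else 0

section OrientBasic

variable {G H : SimpleGraph V} {r : H.ConnectedComponent → H.ConnectedComponent → Prop}

lemma not_both (hor : IsOrient (contractFlat G H) r) {C D} (h : r C D) : ¬ r D C := by
  have hadj := hor.1 C D h
  have := hor.2.1 C D hadj
  rcases this with ⟨_, hn⟩ | ⟨_, hn⟩
  · exact hn
  · exact absurd h hn

lemma r_ne (hor : IsOrient (contractFlat G H) r) {C D} (h : r C D) : C ≠ D :=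
  (hor.1 C D h).1

lemma cm_eq_of_adj {u v : V} (h : H.Adj u v) :
    H.connectedComponentMk u = H.connectedComponentMk v :=
  SimpleGraph.ConnectedComponent.eq.2 h.reachable

lemma c₀_eq_one {u v : V} (hadj : G.Adj u v)
    (hr : r (H.connectedComponentMk u) (H.connectedComponentMk v)) : c₀ G H r u v = 1 :=
  if_pos ⟨hadj, hr⟩

lemma c₀_eq_neg_one (hor : IsOrient (contractFlat G H) r) {u v : V} (hadj : G.Adj u v)
    (hr : r (H.connectedComponentMk v) (H.connectedComponentMk u)) : c₀ G H r u v = -1 := by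
  rw [c₀, if_neg (fun hh => not_both hor hr hh.2), if_pos ⟨hadj, hr⟩]

lemma c₀_zero_of_nadj {u v : V} (hadj : ¬ G.Adj u v) : c₀ G H r u v = 0 := by
  rw [c₀, if_neg (fun hh => hadj hh.1), if_neg (fun hh => hadj hh.1)]

lemma c₀_zero_of_same (hor : IsOrient (contractFlat G H) r) {u v : V}
    (h : H.connectedComponentMk u = H.connectedComponentMk v) : c₀ G H r u v = 0 := by
  rw [c₀, if_neg (fun hh => r_ne hor hh.2 h), if_neg (fun hh => r_ne hor hh.2 h.symm)]

lemma c₀_isCoef (hor : IsOrient (contractFlat G H) r) : IsCoef G (c₀ G H r) := by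
  refine ⟨fun u v => ?_, fun u v h => c₀_zero_of_nadj h, fun u v => ?_⟩
  · by_cases hadj : G.Adj u v
    · by_cases hr : r (H.connectedComponentMk u) (H.connectedComponentMk v)
      · rw [c₀_eq_one hadj hr, c₀_eq_neg_one hor hadj.symm hr]; ring
      · by_cases hr' : r (H.connectedComponentMk v) (H.connectedComponentMk u)
        · rw [c₀_eq_neg_one hor hadj hr', c₀_eq_one hadj.symm hr']
        · rw [c₀, if_neg (fun hh => hr hh.2), if_neg (fun hh => hr' hh.2),
            c₀, if_neg (fun hh => hr' hh.2), if_neg (fun hh => hr hh.2)]; ring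
    · rw [c₀_zero_of_nadj hadj, c₀_zero_of_nadj (fun h => hadj h.symm)]; ring
  · rw [c₀]; split_ifs <;> norm_num

lemma z₀_mem_faceSet (hor : IsOrient (contractFlat G H) r) :
    rowSum (c₀ G H r) ∈ faceSet G H r :=
  ⟨c₀ G H r, c₀_isCoef hor, fun u v hadj hr => c₀_eq_one hadj hr, rfl⟩

lemma rowSum_add (c c' : V → V → ℝ) : rowSum (c + c') = rowSum c + rowSum c' := by
  funext a; simp [rowSum, Finset.sum_add_distrib]

lemma faceSet_eq_image (hflat : IsFlatOf G H) (hor : IsOrient (contractFlat G H) r) :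
    faceSet G H r = (fun y => rowSum (c₀ G H r) + y) '' graphicalZonotope H := by
  have hcross : ∀ u v : V, G.Adj u v →
      H.connectedComponentMk u ≠ H.connectedComponentMk v →
      Xor' (r (H.connectedComponentMk u) (H.connectedComponentMk v))
        (r (H.connectedComponentMk v) (H.connectedComponentMk u)) := by
    intro u v hadj hne
    exact hor.2.1 _ _ ⟨hne, u, v, hadj, rfl, rfl⟩
  have hHadj : ∀ u v : V, H.Adj u v → c₀ G H r u v = 0 := by
    intro u v h; exact c₀_zero_of_same hor (cm_eq_of_adj h)
  ext x
  constructor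
  · rintro ⟨c, hc, hfor, rfl⟩
    refine ⟨rowSum (c - c₀ G H r), ?_, ?_⟩
    · refine mem_zon.2 ⟨c - c₀ G H r, ⟨fun u v => ?_, fun u v h => ?_, fun u v => ?_⟩, rfl⟩
      · simp only [Pi.sub_apply]
        rw [hc.1 u v, (c₀_isCoef hor).1 u v]; ring
      · -- not H-adjacent implies difference is zero
        simp only [Pi.sub_apply]
        by_cases hadj : G.Adj u v
        · have hne : H.connectedComponentMk u ≠ H.connectedComponentMk v := by
            intro heq
            exact h (hflat.2 u v hadj (SimpleGraph.ConnectedComponent.eq.1 heq))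
          rcases hcross u v hadj hne with ⟨hr, _⟩ | ⟨hr', _⟩
          · rw [hfor u v hadj hr, c₀_eq_one hadj hr]; ring
          · have h1 : c v u = 1 := hfor v u hadj.symm hr'
            have h2 : c u v = -1 := by rw [hc.1 u v, h1]
            rw [h2, c₀_eq_neg_one hor hadj hr']; ring
        · rw [hc.2.1 u v hadj, c₀_zero_of_nadj hadj]; ring
      · simp only [Pi.sub_apply]
        by_cases hadjH : H.Adj u v
        · rw [hHadj u v hadjH]; simpa using hc.2.2 u v
        · by_cases hadj : G.Adj u v
          · have hne : H.connectedComponentMk u ≠ H.connectedComponentMk v := by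
              intro heq
              exact hadjH (hflat.2 u v hadj (SimpleGraph.ConnectedComponent.eq.1 heq))
            rcases hcross u v hadj hne with ⟨hr, _⟩ | ⟨hr', _⟩
            · rw [hfor u v hadj hr, c₀_eq_one hadj hr]; norm_num
            · have h1 : c v u = 1 := hfor v u hadj.symm hr'
              have h2 : c u v = -1 := by rw [hc.1 u v, h1]
              rw [h2, c₀_eq_neg_one hor hadj hr']; norm_num
          · rw [hc.2.1 u v hadj, c₀_zero_of_nadj hadj]; norm_num
    · have h2 : c₀ G H r + (c - c₀ G H r) = c := by ring
      dsimp only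
      rw [← rowSum_add, h2]
  · rintro ⟨y, hy, rfl⟩
    obtain ⟨c', hc', rfl⟩ := mem_zon.1 hy
    have hc'G : ∀ u v : V, ¬ H.Adj u v → c' u v = 0 := hc'.2.1
    have hkey : ∀ u v : V, G.Adj u v →
        H.connectedComponentMk u ≠ H.connectedComponentMk v → c' u v = 0 := by
      intro u v hadj hne
      by_contra h0
      have : H.Adj u v := by
        by_contra hH; exact h0 (hc'G u v hH)
      exact hne (cm_eq_of_adj this)
    refine ⟨c₀ G H r + c', ⟨fun u v => ?_, fun u v h => ?_, fun u v => ?_⟩, fun u v hadj hr => ?_, (rowSum_add _ _).symm⟩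
    · simp only [Pi.add_apply]
      rw [hc'.1 u v, (c₀_isCoef hor).1 u v]; ring
    · simp only [Pi.add_apply]
      rw [c₀_zero_of_nadj h, hc'G u v (fun hH => h (hflat.1 hH)), add_zero]
    · simp only [Pi.add_apply]
      by_cases hadjH : H.Adj u v
      · rw [hHadj u v hadjH, zero_add]; exact hc'.2.2 u v
      · rw [hc'G u v hadjH, add_zero]
        exact ((c₀_isCoef hor).2.2 u v)
    · simp only [Pi.add_apply]
      have hne := r_ne hor hr
      rw [c₀_eq_one hadj hr, hkey u v hadj hne, add_zero]

end OrientBasic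

/- =================== linear algebra: edge span and rank =================== -/

def edgeSpan (H : SimpleGraph V) : Submodule ℝ (V → ℝ) :=
  Submodule.span ℝ {x | ∃ u v, H.Adj u v ∧ x = Pi.single u 1 - Pi.single v 1}

noncomputable def compSum (H : SimpleGraph V) :
    (V → ℝ) →ₗ[ℝ] (H.ConnectedComponent → ℝ) where
  toFun x := fun C => ∑ v, if H.connectedComponentMk v = C then x v else 0
  map_add' x y := by
    funext C
    simp only [Pi.add_apply]
    rw [← Finset.sum_add_distrib]
    exact Finset.sum_congr rfl fun v _ => by split_ifs <;> simp
  map_smul' a x := by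
    funext C
    simp only [Pi.smul_apply, RingHom.id_apply, smul_eq_mul, Finset.mul_sum]
    exact Finset.sum_congr rfl fun v _ => by split_ifs <;> simp

lemma compSum_single (H : SimpleGraph V) (v : V) :
    compSum H (Pi.single v 1) = Pi.single (H.connectedComponentMk v) 1 := by
  funext C
  show (∑ u, if H.connectedComponentMk u = C then (Pi.single v 1 : V → ℝ) u else 0) = _
  rw [Finset.sum_eq_single v]
  · simp [Pi.single_apply, eq_comm]
  · intro b _ hb
    simp [Pi.single_apply, hb]
  · simp

lemma edgeSpan_le_ker (H : SimpleGraph V) : edgeSpan H ≤ LinearMap.ker (compSum H) := by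
  rw [edgeSpan, Submodule.span_le]
  rintro x ⟨u, v, hadj, rfl⟩
  rw [SetLike.mem_coe, LinearMap.mem_ker, map_sub, compSum_single, compSum_single,
    cm_eq_of_adj hadj, sub_self]

lemma reach_diff_mem {H : SimpleGraph V} {u v : V} (h : H.Reachable u v) :
    (Pi.single u 1 - Pi.single v 1 : V → ℝ) ∈ edgeSpan H := by
  obtain ⟨p⟩ := h
  induction p with
  | nil => simp
  | @cons a b c hab p ih =>
    have : (Pi.single a 1 - Pi.single c 1 : V → ℝ)
        = (Pi.single a 1 - Pi.single b 1) + (Pi.single b 1 - Pi.single c 1) := by ring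
    rw [this]
    exact Submodule.add_mem _ (Submodule.subset_span ⟨a, b, hab, rfl⟩) ih

lemma mem_edgeSpan_iff_cm {H : SimpleGraph V} (u v : V) :
    (Pi.single u 1 - Pi.single v 1 : V → ℝ) ∈ edgeSpan H
      ↔ H.connectedComponentMk u = H.connectedComponentMk v := by
  constructor
  · intro hmem
    have := edgeSpan_le_ker H hmem
    rw [LinearMap.mem_ker, map_sub, compSum_single, compSum_single] at this
    by_contra hne
    have := congrFun this (H.connectedComponentMk u)
    simp [Pi.single_apply, hne, (fun h => hne h.symm : ¬ H.connectedComponentMk v = H.connectedComponentMk u)] at this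
  · intro h
    exact reach_diff_mem (SimpleGraph.ConnectedComponent.eq.1 h)

lemma compSum_surjective (H : SimpleGraph V) : Function.Surjective (compSum H) := by
  haveI : Fintype H.ConnectedComponent := Fintype.ofFinite _
  rw [← LinearMap.range_eq_top]
  rw [← top_le_iff]
  have hsingle : ∀ C : H.ConnectedComponent,
      (Pi.single C 1 : H.ConnectedComponent → ℝ) ∈ LinearMap.range (compSum H) := by
    intro C
    obtain ⟨v, hv⟩ := C.exists_rep
    exact ⟨Pi.single v 1, by rw [compSum_single]; exact congrArg (fun D => (Pi.single D 1 : H.ConnectedComponent → ℝ)) hv⟩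
  intro x _
  have hx : x = ∑ C, x C • (Pi.single C 1 : H.ConnectedComponent → ℝ) := by
    funext D
    simp [Pi.single_apply]
  rw [hx]
  exact Submodule.sum_mem _ fun C _ => Submodule.smul_mem _ _ (hsingle C)

/-- each zonotope point lies in the edge span -/
lemma zon_subset_edgeSpan {H : SimpleGraph V} {x : V → ℝ}
    (hx : x ∈ graphicalZonotope H) : x ∈ edgeSpan H := by
  obtain ⟨c, hc, rfl⟩ := mem_zon.1 hx
  have hrw : rowSum c = ∑ p : V × V, (c p.1 p.2 / 2) • ((Pi.single p.1 1 : V → ℝ) - Pi.single p.2 1) := by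
    funext a
    simp only [rowSum]
    rw [Finset.sum_apply]
    simp only [Pi.smul_apply, Pi.sub_apply, Pi.single_apply, smul_eq_mul]
    rw [Fintype.sum_prod_type]
    have : ∀ u v : V, c u v / 2 * ((if a = u then (1:ℝ) else 0) - if a = v then 1 else 0)
        = (if u = a then c a v / 2 else 0) - (if v = a then c u a / 2 else 0) := by
      intro u v
      by_cases hu : u = a <;> by_cases hv : v = a <;>
        subst_vars <;> simp_all [eq_comm] <;> ring
    have h2 : ∀ u : V, (∑ v, (c u v / 2 * ((if a = u then (1:ℝ) else 0) - if a = v then 1 else 0)))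
        = (if u = a then (∑ v, c a v / 2) else 0) - c u a / 2 := by
      intro u
      rw [Finset.sum_congr rfl fun v _ => this u v, Finset.sum_sub_distrib]
      congr 1
      · split_ifs with h <;> simp [h]
      · rw [Finset.sum_ite_eq' Finset.univ a (fun v => c u a / 2)]
        simp
    rw [Finset.sum_congr rfl fun u (_ : u ∈ Finset.univ) => h2 u, Finset.sum_sub_distrib,
      Finset.sum_ite_eq' Finset.univ a (fun _ => ∑ v, c a v / 2)]
    have h3 : ∑ u, c u a / 2 = - ∑ u, c a u / 2 := by
      rw [← Finset.sum_neg_distrib]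
      exact Finset.sum_congr rfl fun u _ => by rw [hc.1 u a]; ring
    rw [h3]
    have h4 : ∑ u, c a u / 2 = (∑ u, c a u) / 2 := by rw [Finset.sum_div]
    simp only [Finset.mem_univ, if_pos]
    rw [h4]
    ring
  rw [hrw]
  refine Submodule.sum_mem _ fun p _ => ?_
  by_cases hadj : H.Adj p.1 p.2
  · exact Submodule.smul_mem _ _ (Submodule.subset_span ⟨p.1, p.2, hadj, rfl⟩)
  · rw [hc.2.1 p.1 p.2 hadj]
    simp

lemma vectorSpan_zon (H : SimpleGraph V) :
    vectorSpan ℝ (graphicalZonotope H) = edgeSpan H := by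
  apply le_antisymm
  · rw [vectorSpan_def, Submodule.span_le]
    intro x hx
    rw [Set.mem_vsub] at hx
    obtain ⟨y, hy, z, hz, rfl⟩ := hx
    exact Submodule.sub_mem _ (zon_subset_edgeSpan hy) (zon_subset_edgeSpan hz)
  · rw [edgeSpan, Submodule.span_le]
    rintro x ⟨u, v, hadj, rfl⟩
    have := vsub_mem_vectorSpan ℝ (edge_mem_zon hadj) (zero_mem_zon H)
    simpa using this

lemma vectorSpan_image_add (z : V → ℝ) (s : Set (V → ℝ)) :
    vectorSpan ℝ ((fun y => z + y) '' s) = vectorSpan ℝ s := by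
  rw [vectorSpan_def, vectorSpan_def]
  congr 1
  ext x
  rw [Set.mem_vsub, Set.mem_vsub]
  constructor
  · rintro ⟨a, ⟨a', ha', rfl⟩, b, ⟨b', hb', rfl⟩, rfl⟩
    exact ⟨a', ha', b', hb', by simp⟩
  · rintro ⟨a, ha, b, hb, rfl⟩
    exact ⟨z + a, ⟨a, ha, rfl⟩, z + b, ⟨b, hb, rfl⟩, by simp⟩

lemma finrank_edgeSpan (H : SimpleGraph V) :
    Module.finrank ℝ (edgeSpan H) + Nat.card H.ConnectedComponent = Fintype.card V := by
  haveI : Fintype H.ConnectedComponent := Fintype.ofFinite _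
  rw [Nat.card_eq_fintype_card]
  have hrn := LinearMap.finrank_range_add_finrank_ker (compSum H)
  rw [LinearMap.range_eq_top.2 (compSum_surjective H)] at hrn
  have h1 : Module.finrank ℝ (⊤ : Submodule ℝ (H.ConnectedComponent → ℝ))
      = Fintype.card H.ConnectedComponent := by
    rw [finrank_top, Module.finrank_pi]
  have h2 : Module.finrank ℝ (V → ℝ) = Fintype.card V := by
    rw [Module.finrank_pi]
  rw [h1, h2] at hrn
  -- upper bound
  have hle : Module.finrank ℝ (edgeSpan H) ≤ Module.finrank ℝ (LinearMap.ker (compSum H)) :=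
    Submodule.finrank_mono (edgeSpan_le_ker H)
  -- lower bound via the quotient
  have hq := Submodule.finrank_quotient_add_finrank (edgeSpan H)
  rw [h2] at hq
  have hqle : Module.finrank ℝ ((V → ℝ) ⧸ edgeSpan H) ≤ Fintype.card H.ConnectedComponent := by
    set g : H.ConnectedComponent → ((V → ℝ) ⧸ edgeSpan H) :=
      fun C => Submodule.mkQ (edgeSpan H) (Pi.single C.exists_rep.choose 1) with hg
    have hsingle : ∀ v : V, Submodule.mkQ (edgeSpan H) (Pi.single v 1)
        = g (H.connectedComponentMk v) := by
      intro v
      rw [hg]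
      dsimp only
      rw [Submodule.mkQ_apply, Submodule.mkQ_apply, Submodule.Quotient.eq]
      refine (mem_edgeSpan_iff_cm v _).2 ?_
      have := (H.connectedComponentMk v).exists_rep.choose_spec
      exact this.symm
    have htop : (⊤ : Submodule ℝ ((V → ℝ) ⧸ edgeSpan H)) ≤ Submodule.span ℝ (Set.range g) := by
      intro q _
      obtain ⟨x, rfl⟩ := Submodule.Quotient.mk_surjective _ q
      rw [← Submodule.mkQ_apply, LinearMap.pi_apply_eq_sum_univ]
      refine Submodule.sum_mem _ fun v _ => Submodule.smul_mem _ _ ?_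
      have : (fun j => if v = j then (1:ℝ) else 0) = Pi.single v 1 := by
        funext j; rw [Pi.single_apply]; exact if_congr eq_comm rfl rfl
      rw [this, hsingle v]
      exact Submodule.subset_span (Set.mem_range_self _)
    calc Module.finrank ℝ ((V → ℝ) ⧸ edgeSpan H)
        = Module.finrank ℝ (Submodule.span ℝ (Set.range g)) := by
          have hst : Submodule.span ℝ (Set.range g) = ⊤ := eq_top_iff.2 htop
          rw [hst, finrank_top]
      _ ≤ (Set.range g).toFinset.card := finrank_span_le_card _
      _ ≤ Fintype.card H.ConnectedComponent := by
          rw [Set.toFinset_range]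
          exact (Finset.card_image_le).trans (le_of_eq (Finset.card_univ))
  omega

/- =================== canonical weight from an orientation =================== -/

noncomputable def hgt {α : Type} (r : α → α → Prop) (C : α) : ℝ :=
  ((Set.ncard {D | Relation.TransGen r C D}) : ℝ)

lemma hgt_lt {α : Type} [Finite α] {r : α → α → Prop}
    (hacyc : ∀ v, ¬ Relation.TransGen r v v) {C D : α} (h : r C D) : hgt r D < hgt r C := by
  have hsub : {E | Relation.TransGen r D E} ⊂ {E | Relation.TransGen r C E} := by
    constructor
    · exact fun E hE => (Relation.TransGen.single h).trans hE
    · intro hback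
      exact hacyc D (hback (Relation.TransGen.single h))
  exact_mod_cast Nat.cast_lt.2 (Set.ncard_lt_ncard hsub (Set.toFinite _))

noncomputable def wOf (H : SimpleGraph V)
    (r : H.ConnectedComponent → H.ConnectedComponent → Prop) : V → ℝ :=
  fun v => hgt r (H.connectedComponentMk v)

lemma compat_wOf {G H : SimpleGraph V} {r} (hor : IsOrient (contractFlat G H) r) :
    Compat G (wOf H r) H r := by
  constructor
  · intro u v h
    unfold wOf
    rw [SimpleGraph.ConnectedComponent.eq.2 h]
  · intro u v hadj
    by_cases heq : H.connectedComponentMk u = H.connectedComponentMk v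
    · unfold wOf
      rw [heq]
      simp only [lt_irrefl, false_iff]
      intro hr
      exact r_ne hor hr rfl
    · have hcadj : (contractFlat G H).Adj (H.connectedComponentMk u) (H.connectedComponentMk v) :=
        ⟨heq, u, v, hadj, rfl, rfl⟩
      rcases hor.2.1 _ _ hcadj with ⟨hr, _⟩ | ⟨hr, hnr⟩
      · simp only [hr, iff_true]
        exact hgt_lt hor.2.2 hr
      · have := hgt_lt hor.2.2 hr
        unfold wOf
        constructor
        · intro hlt; exact absurd hlt (asymm this)
        · intro hr'; exact absurd hr' hnr
  
/- =================== flat and orientation from a weight =================== -/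

def flatOf (G : SimpleGraph V) (w : V → ℝ) : SimpleGraph V where
  Adj u v := G.Adj u v ∧ w u = w v
  symm := ⟨fun u v h => ⟨h.1.symm, h.2.symm⟩⟩
  loopless := ⟨fun v h => G.loopless.irrefl v h.1⟩

lemma flatOf_w_eq {G : SimpleGraph V} {w : V → ℝ} {u v : V}
    (h : (flatOf G w).Reachable u v) : w u = w v := by
  obtain ⟨p⟩ := h
  induction p with
  | nil => rfl
  | @cons a b c hab p ih => exact hab.2.trans ih

lemma flatOf_isFlat (G : SimpleGraph V) (w : V → ℝ) : IsFlatOf G (flatOf G w) := by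
  constructor
  · intro u v h; exact h.1
  · intro u v hadj hreach
    exact ⟨hadj, flatOf_w_eq hreach⟩

lemma flatOf_w_eq_of_cm {G : SimpleGraph V} {w : V → ℝ} {u v : V}
    (h : (flatOf G w).connectedComponentMk u = (flatOf G w).connectedComponentMk v) :
    w u = w v :=
  flatOf_w_eq (SimpleGraph.ConnectedComponent.eq.1 h)

def orientOf (G : SimpleGraph V) (w : V → ℝ) :
    (flatOf G w).ConnectedComponent → (flatOf G w).ConnectedComponent → Prop :=
  fun C D => ∃ u v, G.Adj u v ∧ (flatOf G w).connectedComponentMk u = C ∧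
    (flatOf G w).connectedComponentMk v = D ∧ w v < w u

lemma orientOf_not_both {G : SimpleGraph V} {w : V → ℝ} {C D}
    (h1 : orientOf G w C D) (h2 : orientOf G w D C) : False := by
  obtain ⟨u, v, _, hu, hv, hlt⟩ := h1
  obtain ⟨u', v', _, hu', hv', hlt'⟩ := h2
  have e1 : w u = w v' := flatOf_w_eq_of_cm (hu.trans hv'.symm)
  have e2 : w v = w u' := flatOf_w_eq_of_cm (hv.trans hu'.symm)
  linarith

lemma orientOf_isOrient (G : SimpleGraph V) (w : V → ℝ) :
    IsOrient (contractFlat G (flatOf G w)) (orientOf G w) := by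
  refine ⟨?_, ?_, ?_⟩
  · rintro C D ⟨u, v, hadj, hu, hv, hlt⟩
    refine ⟨?_, u, v, hadj, hu, hv⟩
    rintro rfl
    exact absurd (flatOf_w_eq_of_cm (hu.trans hv.symm)) (by linarith)
  · rintro C D ⟨hne, u, v, hadj, hu, hv⟩
    have hwne : w u ≠ w v := by
      intro he
      exact hne (hu ▸ hv ▸ cm_eq_of_adj (⟨hadj, he⟩ : (flatOf G w).Adj u v))
    rcases lt_trichotomy (w u) (w v) with h1 | h1 | h1
    · exact Or.inr ⟨⟨v, u, hadj.symm, hv, hu, h1⟩, fun hh => orientOf_not_both hh ⟨v, u, hadj.symm, hv, hu, h1⟩⟩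
    · exact absurd h1 hwne
    · exact Or.inl ⟨⟨u, v, hadj, hu, hv, h1⟩, fun hh => orientOf_not_both hh ⟨u, v, hadj, hu, hv, h1⟩⟩
  · intro C hC
    set wl : (flatOf G w).ConnectedComponent → ℝ :=
      SimpleGraph.ConnectedComponent.lift w
        (fun u v p _ => flatOf_w_eq ⟨p⟩) with hwl
    have hstep : ∀ C D, orientOf G w C D → wl D < wl C := by
      rintro C D ⟨u, v, hadj, rfl, rfl, hlt⟩
      simpa [hwl] using hlt
    have hmono : ∀ C D, Relation.TransGen (orientOf G w) C D → wl D < wl C := by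
      intro C D h
      induction h with
      | single hb => exact hstep _ _ hb
      | tail _ hbc ih => exact lt_trans (hstep _ _ hbc) ih
    exact absurd (hmono C C hC) (lt_irrefl _)

lemma compat_orientOf (G : SimpleGraph V) (w : V → ℝ) :
    Compat G w (flatOf G w) (orientOf G w) := by
  constructor
  · exact fun u v h => flatOf_w_eq h
  · intro u v hadj
    constructor
    · intro h; exact ⟨u, v, hadj, rfl, rfl, h⟩
    · rintro ⟨u', v', hadj', hu', hv', hlt⟩
      have e1 : w u' = w u := flatOf_w_eq_of_cm hu'
      have e2 : w v' = w v := flatOf_w_eq_of_cm hv'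
      linarith

/- =================== face properties =================== -/

section FaceProps

variable {G H : SimpleGraph V} {r : H.ConnectedComponent → H.ConnectedComponent → Prop}

lemma isExposed_faceSet (hor : IsOrient (contractFlat G H) r) :
    IsExposed ℝ (graphicalZonotope G) (faceSet G H r) := by
  intro _
  refine ⟨LinearMap.toContinuousLinearMap (wtL (wOf H r)), ?_⟩
  rw [faceSet_eq_face (compat_wOf hor)]
  rfl

lemma vectorSpan_faceSet (hflat : IsFlatOf G H) (hor : IsOrient (contractFlat G H) r) :
    vectorSpan ℝ (faceSet G H r) = edgeSpan H := by
  rw [faceSet_eq_image hflat hor, vectorSpan_image_add, vectorSpan_zon]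

lemma dim_faceSet (hflat : IsFlatOf G H) (hor : IsOrient (contractFlat G H) r) :
    Module.finrank ℝ (affineSpan ℝ (faceSet G H r)).direction
      + Nat.card H.ConnectedComponent = Fintype.card V := by
  rw [direction_affineSpan, vectorSpan_faceSet hflat hor]
  exact finrank_edgeSpan H

lemma flat_eq_of_edgeSpan {H' : SimpleGraph V} (hflat : IsFlatOf G H) (hflat' : IsFlatOf G H')
    (h : edgeSpan H = edgeSpan H') : H = H' := by
  have key : ∀ K : SimpleGraph V, IsFlatOf G K → ∀ u v,
      (K.Adj u v ↔ G.Adj u v ∧ (Pi.single u 1 - Pi.single v 1 : V → ℝ) ∈ edgeSpan K) := by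
    intro K hK u v
    constructor
    · intro hadj
      exact ⟨hK.1 hadj, (mem_edgeSpan_iff_cm u v).2 (cm_eq_of_adj hadj)⟩
    · rintro ⟨hG, hmem⟩
      exact hK.2 u v hG (SimpleGraph.ConnectedComponent.eq.1 ((mem_edgeSpan_iff_cm u v).1 hmem))
  ext u v
  rw [key H hflat u v, key H' hflat' u v, h]

lemma orient_imp {r' : H.ConnectedComponent → H.ConnectedComponent → Prop}
    (hor : IsOrient (contractFlat G H) r) (hor' : IsOrient (contractFlat G H) r')
    (hss : faceSet G H r ⊆ faceSet G H r') : ∀ C D, r C D → r' C D := by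
  intro C D h
  obtain ⟨hne, u, v, hadj, hu, hv⟩ := hor.1 C D h
  by_contra hn
  rcases hor'.2.1 C D (hor.1 C D h) with ⟨hr', _⟩ | ⟨hr', _⟩
  · exact hn hr'
  · have hx : rowSum (c₀ G H r) ∈ faceSet G H r' := hss (z₀_mem_faceSet hor)
    have hforce := forced_of_mem_face (compat_wOf hor') hx (c₀_isCoef hor) rfl
    have h1 : c₀ G H r v u = 1 := hforce v u hadj.symm (by rw [hu, hv]; exact hr')
    have h2 : c₀ G H r v u = -1 :=
      c₀_eq_neg_one hor hadj.symm (by rw [hu, hv]; exact h)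
    rw [h1] at h2
    norm_num at h2

end FaceProps

end ZAux


/-- The number of `k`-dimensional faces of the graphical zonotope equals the sum over
flats `F` of rank `k` of the number of acyclic orientations of `Γ/F`. -/
theorem faceCount_eq_sum_flats_acyclicOrientations
    {V : Type} [Fintype V] [DecidableEq V] (n : ℕ) (hn : 1 ≤ n)
    (G : SimpleGraph V) (hG : G.Connected) (hV : Fintype.card V = n)
    (k : ℕ) (hk : k ≤ n - 1) :
    faceCount G k
      = ∑ᶠ H ∈ {H : SimpleGraph V | IsFlatOf G H ∧ flatRank H = k},
          acyclicOrientationCount (contractFlat G H) := by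
  classical
  set S : Set (SimpleGraph V) := {H : SimpleGraph V | IsFlatOf G H ∧ flatRank H = k} with hS
  haveI : Fintype {H : SimpleGraph V // IsFlatOf G H ∧ flatRank H = k} := Fintype.ofFinite _
  haveI : ∀ H : SimpleGraph V, Fintype {r // ZAux.IsOrient (contractFlat G H) r} :=
    fun H => Fintype.ofFinite _
  let Φ : (Σ H : {H : SimpleGraph V // IsFlatOf G H ∧ flatRank H = k},
        {r // ZAux.IsOrient (contractFlat G H.1) r}) →
      {F : Set (V → ℝ) // F.Nonempty ∧ IsExposed ℝ (graphicalZonotope G) F ∧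
        Module.finrank ℝ (affineSpan ℝ F).direction = k} := fun p =>
    ⟨ZAux.faceSet G p.1.1 p.2.1,
      ⟨_, ZAux.z₀_mem_faceSet p.2.2⟩,
      ZAux.isExposed_faceSet p.2.2,
      by
        have hd := ZAux.dim_faceSet p.1.2.1 p.2.2
        have hrank := p.1.2.2
        unfold flatRank at hrank
        omega⟩
  have hinj : Function.Injective Φ := by
    rintro ⟨⟨H, hH⟩, ⟨r, hr⟩⟩ ⟨⟨H', hH'⟩, ⟨r', hr'⟩⟩ h
    have hface : ZAux.faceSet G H r = ZAux.faceSet G H' r' := congrArg Subtype.val h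
    have hHH : H = H' := ZAux.flat_eq_of_edgeSpan hH.1 hH'.1
      (by rw [← ZAux.vectorSpan_faceSet hH.1 hr, hface, ZAux.vectorSpan_faceSet hH'.1 hr'])
    subst hHH
    have hrr : r = r' := by
      funext C D
      exact propext ⟨fun hh => ZAux.orient_imp hr hr' hface.subset C D hh,
        fun hh => ZAux.orient_imp hr' hr hface.symm.subset C D hh⟩
    subst hrr
    rfl
  have hsurj : Function.Surjective Φ := by
    rintro ⟨F, hne, hexp, hdim⟩
    obtain ⟨l, hl⟩ := hexp hne
    set w : V → ℝ := fun v => l (Pi.single v 1) with hw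
    have hlw : ∀ x, l x = ZAux.wt w x := by
      intro x
      have hx := LinearMap.pi_apply_eq_sum_univ (l : (V → ℝ) →ₗ[ℝ] ℝ) x
      rw [ContinuousLinearMap.coe_coe] at hx
      rw [hx]
      unfold ZAux.wt
      refine Finset.sum_congr rfl fun v _ => ?_
      have hsingle : (fun j => if v = j then (1:ℝ) else 0) = Pi.single v 1 := by
        funext j; rw [Pi.single_apply]; exact if_congr eq_comm rfl rfl
      rw [hsingle, smul_eq_mul]
      simp only [hw]
      ring
    have hF : F = ZAux.faceSet G (ZAux.flatOf G w) (ZAux.orientOf G w) := by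
      rw [ZAux.faceSet_eq_face (ZAux.compat_orientOf G w), hl]
      ext x
      simp only [Set.mem_setOf_eq, hlw]
    have hflat := ZAux.flatOf_isFlat G w
    have hor := ZAux.orientOf_isOrient G w
    have hrank : flatRank (ZAux.flatOf G w) = k := by
      have hd := ZAux.dim_faceSet hflat hor
      rw [← hF, hdim] at hd
      unfold flatRank
      omega
    exact ⟨⟨⟨_, hflat, hrank⟩, ⟨_, hor⟩⟩, Subtype.ext hF.symm⟩
  have hcount : faceCount G k
      = Nat.card (Σ H : {H : SimpleGraph V // IsFlatOf G H ∧ flatRank H = k},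
          {r // ZAux.IsOrient (contractFlat G H.1) r}) :=
    (Nat.card_congr (Equiv.ofBijective Φ ⟨hinj, hsurj⟩)).symm
  rw [hcount, Nat.card_eq_fintype_card, Fintype.card_sigma]
  have hSfin : S.Finite := Set.toFinite _
  rw [← hSfin.coe_toFinset, finsum_mem_coe_finset]
  rw [Finset.sum_subtype hSfin.toFinset (fun H => Set.Finite.mem_toFinset _)
    (fun H => acyclicOrientationCount (contractFlat G H))]
  exact Finset.sum_congr rfl fun H _ =>
    (Nat.card_eq_fintype_card (α := {r // ZAux.IsOrient (contractFlat G H.1) r})).symm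
end

section
/- Let n ≥ 3 and let C_n be the cycle graph on n vertices. Then the f-polynomial of the graphical zonotope Z_{C_n} satisfies Σ_{k=0}^{n−1} f_k(Z_{C_n})·q^k = q^n + q^{n−1} + (q+2)^n − 2(q+1)^n, as an identity in ℤ[q]. -/
open Polynomial

/-!
Indexing the edge `{w, w + 1}` of `C_n` by `w`, the zonotope `Z_{C_n}` is the image of the cube
`[-1, 1]^n` under the boundary map `T t = ∑ w, t w • (e (w + 1) - e w)`, whose kernel is the
constants. A face of `T [-1, 1]^n` maximises some `l`, and `l ∘ T = ⟪a, ·⟫` with `∑ a = 0`; the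
face is then `T` of the cube face on which `t i = sign (a i)` whenever `a i ≠ 0`. The sign vectors
of zero-sum vectors are `0` and those taking both values `±1`, and distinct ones give distinct
faces: `σ ≠ 0` a face of dimension `#{i | σ i = 0}` (`T` is injective on its span), `σ = 0` the
whole zonotope, of dimension `n - 1`. Inclusion–exclusion over the sign vectors missing `1` or
`-1` turns `∑ q ^ #{i | σ i = 0}` over the vectors with both signs into
`(q + 2)^n - 2 (q + 1)^n + q^n`.
-/

open Finset Matrix

section CubeFaces

variable {ι : Type*}

/-- `cubeFace 0` is the cube `[-1, 1]^ι` itself. -/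
def cubeFace (σ : ι → SignType) : Set (ι → ℝ) :=
  {t | (∀ i, |t i| ≤ 1) ∧ ∀ i, σ i ≠ 0 → t i = σ i}

lemma cast_mem_cubeFace (σ : ι → SignType) : (fun i => (σ i : ℝ)) ∈ cubeFace σ :=
  ⟨fun i => by dsimp only; cases σ i <;> simp, fun _ _ => rfl⟩

lemma cubeFace_subset_cubeFace_zero (σ : ι → SignType) : cubeFace σ ⊆ cubeFace 0 :=
  fun _ ht => ⟨ht.1, fun _ h => absurd rfl h⟩

lemma mul_le_abs_of_abs_le_one {a t : ℝ} (ht : |t| ≤ 1) : a * t ≤ |a| :=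
  calc a * t ≤ |a| * |t| := (le_abs_self _).trans (abs_mul a t).le
    _ ≤ |a| := mul_le_of_le_one_right (abs_nonneg a) ht

lemma mul_eq_abs_iff {a t : ℝ} :
    a * t = |a| ↔ (SignType.sign a ≠ 0 → t = SignType.sign a) := by
  rcases lt_trichotomy a 0 with ha | rfl | ha
  · rw [abs_of_neg ha, sign_neg ha, ← mul_neg_one a, mul_right_inj' ha.ne]
    simp
  · simp
  · rw [abs_of_pos ha, sign_pos ha]
    nth_rw 2 [← mul_one a]
    rw [mul_right_inj' ha.ne']
    simp

lemma cubeFace_sign_eq [Fintype ι] (a : ι → ℝ) :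
    cubeFace (fun i => SignType.sign (a i))
      = {t ∈ cubeFace 0 | ∀ s ∈ cubeFace 0, a ⬝ᵥ s ≤ a ⬝ᵥ t} := by
  have hle : ∀ t ∈ cubeFace (0 : ι → SignType), a ⬝ᵥ t ≤ ∑ i, |a i| := fun t ht =>
    sum_le_sum fun i _ => mul_le_abs_of_abs_le_one (ht.1 i)
  have heq : ∀ t ∈ cubeFace (0 : ι → SignType),
      a ⬝ᵥ t = ∑ i, |a i| ↔ t ∈ cubeFace (fun i => SignType.sign (a i)) := fun t ht => by
    rw [dotProduct, sum_eq_sum_iff_of_le fun i _ => mul_le_abs_of_abs_le_one (ht.1 i)]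
    simp only [mem_univ, forall_const, mul_eq_abs_iff]
    exact (and_iff_right ht.1).symm
  have hmax : a ⬝ᵥ (fun i => ((SignType.sign (a i) : SignType) : ℝ)) = ∑ i, |a i| :=
    (heq _ (cubeFace_subset_cubeFace_zero _ (cast_mem_cubeFace _))).2 (cast_mem_cubeFace _)
  ext t
  refine ⟨fun ht => ⟨cubeFace_subset_cubeFace_zero _ ht, fun s hs => ?_⟩, fun ⟨ht, hopt⟩ => ?_⟩
  · rw [(heq t (cubeFace_subset_cubeFace_zero _ ht)).2 ht]
    exact hle s hs
  · refine (heq t ht).1 (le_antisymm (hle t ht) ?_)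
    rw [← hmax]
    exact hopt _ (cubeFace_subset_cubeFace_zero _ (cast_mem_cubeFace _))

lemma vectorSpan_cubeFace [Fintype ι] [DecidableEq ι] (σ : ι → SignType) :
    vectorSpan ℝ (cubeFace σ) = ⨅ i ∈ {i | σ i ≠ 0}, LinearMap.ker (LinearMap.proj i) := by
  apply le_antisymm
  · rw [vectorSpan_def, Submodule.span_le]
    rintro _ ⟨t, ht, s, hs, rfl⟩
    simp only [SetLike.mem_coe, Submodule.mem_iInf, LinearMap.mem_ker, LinearMap.coe_proj,
      Function.eval, vsub_eq_sub, Pi.sub_apply]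
    intro i hi
    rw [ht.2 i hi, hs.2 i hi, sub_self]
  · refine (LinearMap.iInf_ker_proj_le_iSup_range_single ℝ (fun _ => ℝ) (I := {i | σ i = 0})
      (Set.toFinite _) (by simp [codisjoint_iff, Set.union_def, em])).trans ?_
    refine iSup₂_le fun i hi => ?_
    rintro _ ⟨c, rfl⟩
    have hmem : (fun j => (σ j : ℝ)) + Pi.single i 1 ∈ cubeFace σ := by
      refine ⟨fun j => ?_, fun j hj => ?_⟩
      · by_cases hji : j = i
        · subst hji
          simp [show σ j = 0 from hi]
        · simpa [hji] using (cast_mem_cubeFace σ).1 j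
      · have hji : j ≠ i := fun h => hj (h ▸ hi)
        simp [hji]
    have hsingle : Pi.single i (1 : ℝ) ∈ vectorSpan ℝ (cubeFace σ) := by
      simpa using vsub_mem_vectorSpan ℝ hmem (cast_mem_cubeFace σ)
    simpa [← Pi.single_smul'] using Submodule.smul_mem _ c hsingle

lemma finrank_vectorSpan_cubeFace [Fintype ι] [DecidableEq ι] (σ : ι → SignType) :
    Module.finrank ℝ (vectorSpan ℝ (cubeFace σ)) = #{i | σ i = 0} := by
  rw [vectorSpan_cubeFace, (LinearMap.iInfKerProjEquiv ℝ (fun _ => ℝ) (I := {i | σ i = 0})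
    (J := {i | σ i ≠ 0}) (Set.disjoint_left.2 fun i hi hi' => (show σ i ≠ 0 from hi') hi)
    (fun i _ => em (σ i = 0))).finrank_eq]
  simp [Module.finrank_fintype_fun_eq_card, Fintype.card_subtype]

end CubeFaces

section LinearImage

variable {ι E : Type*} [Fintype ι] [DecidableEq ι] [NormedAddCommGroup E] [NormedSpace ℝ E]

lemma image_setOf_forall_le {α β : Type*} (f : α → β) (g : β → ℝ) (S : Set α) :
    {y ∈ f '' S | ∀ z ∈ f '' S, g z ≤ g y} = f '' {x ∈ S | ∀ x' ∈ S, g (f x') ≤ g (f x)} := by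
  ext y
  constructor
  · rintro ⟨⟨x, hx, rfl⟩, hmax⟩
    exact ⟨x, ⟨hx, fun x' hx' => hmax _ (Set.mem_image_of_mem f hx')⟩, rfl⟩
  · rintro ⟨x, ⟨hx, hmax⟩, rfl⟩
    exact ⟨Set.mem_image_of_mem f hx, Set.forall_mem_image.2 hmax⟩

/-- The pullbacks `l ∘ T` are exactly the functionals `a ⬝ᵥ ·` vanishing on `ker T`
(`LinearMap.range_dualMap_eq_dualAnnihilator_ker`). -/
theorem nonempty_isExposed_image_cube_iff [FiniteDimensional ℝ E] (T : (ι → ℝ) →ₗ[ℝ] E)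
    {F : Set E} :
    F.Nonempty ∧ IsExposed ℝ (T '' cubeFace 0) F ↔
      ∃ a : ι → ℝ, (∀ t ∈ LinearMap.ker T, a ⬝ᵥ t = 0) ∧
        F = T '' cubeFace (fun i => SignType.sign (a i)) := by
  constructor
  · rintro ⟨hne, hexp⟩
    obtain ⟨l, rfl⟩ := hexp hne
    set a := (dotProductEquiv ℝ ι).symm (l.toLinearMap ∘ₗ T)
    have hl : ∀ t, l (T t) = a ⬝ᵥ t := fun t =>
      (LinearMap.congr_fun ((dotProductEquiv ℝ ι).apply_symm_apply (l.toLinearMap ∘ₗ T)) t).symm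
    refine ⟨a, fun t ht => by rw [← hl, LinearMap.mem_ker.1 ht, map_zero], ?_⟩
    simp only [image_setOf_forall_le, cubeFace_sign_eq, hl]
  · rintro ⟨a, ha, rfl⟩
    have hmem : dotProductEquiv ℝ ι a ∈ (LinearMap.ker T).dualAnnihilator :=
      (Submodule.mem_dualAnnihilator _).2 ha
    rw [← LinearMap.range_dualMap_eq_dualAnnihilator_ker] at hmem
    obtain ⟨ψ, hψ⟩ := hmem
    refine ⟨(Set.nonempty_of_mem (cast_mem_cubeFace _)).image T,
      fun _ => ⟨LinearMap.toContinuousLinearMap ψ, ?_⟩⟩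
    have hl : ∀ t, ψ (T t) = a ⬝ᵥ t := fun t => LinearMap.congr_fun hψ t
    simp only [image_setOf_forall_le, LinearMap.coe_toContinuousLinearMap', hl, cubeFace_sign_eq]

end LinearImage

lemma SignType.cast_real_injective : Function.Injective (fun s : SignType => (s : ℝ)) := by
  intro s t h
  cases s <;> cases t <;> first | rfl |
    norm_num [SignType.zero_eq_zero, SignType.neg_eq_neg_one, SignType.pos_eq_one] at h

section SignVectors

variable {ι : Type*}

def HasBothSigns (σ : ι → SignType) : Prop :=
  (∃ i, σ i = 1) ∧ ∃ i, σ i = -1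

lemma exists_sum_eq_zero_sign_eq_iff [Fintype ι] {σ : ι → SignType} :
    (∃ a : ι → ℝ, ∑ i, a i = 0 ∧ (fun i => SignType.sign (a i)) = σ) ↔
      σ = 0 ∨ HasBothSigns σ := by
  constructor
  · rintro ⟨a, ha, rfl⟩
    rcases eq_or_ne a 0 with rfl | hne
    · exact Or.inl (funext fun _ => by simp)
    obtain ⟨i, hi⟩ := Function.ne_iff.1 hne
    obtain ⟨p, -, hp⟩ := exists_pos_of_sum_zero_of_exists_nonzero a ha ⟨i, mem_univ i, hi⟩
    obtain ⟨m, -, hm⟩ := exists_pos_of_sum_zero_of_exists_nonzero (-a)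
      (by simp [sum_neg_distrib, ha]) ⟨i, mem_univ i, neg_ne_zero.2 hi⟩
    exact Or.inr ⟨⟨p, sign_pos hp⟩, ⟨m, sign_neg (neg_pos.1 hm)⟩⟩
  · rintro (rfl | ⟨⟨p, hp⟩, ⟨m, hm⟩⟩)
    · exact ⟨0, by simp, funext fun _ => by simp⟩
    set P : ℝ := ((#{j | σ j = 1} : ℕ) : ℝ)
    set M : ℝ := ((#{j | σ j = -1} : ℕ) : ℝ)
    have hP : 0 < P := by
      simpa [P] using card_pos.2 ⟨p, mem_filter.2 ⟨mem_univ p, hp⟩⟩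
    have hM : 0 < M := by
      simpa [M] using card_pos.2 ⟨m, mem_filter.2 ⟨mem_univ m, hm⟩⟩
    refine ⟨fun i => M * (if σ i = 1 then 1 else 0) - P * (if σ i = -1 then 1 else 0), ?_, ?_⟩
    · simp only [sum_sub_distrib, ← mul_sum, sum_boole, P, M]
      ring
    · funext i
      cases h : σ i <;> simp [SignType.zero_eq_zero, SignType.neg_eq_neg_one, SignType.pos_eq_one,
        h, sign_pos hM, sign_neg (neg_neg_of_pos hP)]

lemma HasBothSigns.ne_zero {σ : ι → SignType} (hσ : HasBothSigns σ) : σ ≠ 0 := by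
  rintro rfl
  obtain ⟨⟨i, hi⟩, -⟩ := hσ
  exact absurd hi (by simp)

instance [Fintype ι] : DecidablePred (HasBothSigns (ι := ι)) := fun σ =>
  inferInstanceAs (Decidable ((∃ i, σ i = 1) ∧ ∃ i, σ i = -1))

lemma sum_piFinset_pow_card_filter_eq_zero [Fintype ι] [DecidableEq ι] {R : Type*}
    [CommSemiring R] (x : R) (S : Finset SignType) :
    ∑ σ ∈ Fintype.piFinset fun _ : ι => S, x ^ #{i | σ i = 0}
      = (∑ s ∈ S, if s = 0 then x else 1) ^ Fintype.card ι := by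
  rw [← card_univ, ← prod_const, prod_univ_sum]
  refine sum_congr rfl fun σ _ => ?_
  rw [prod_ite, prod_const, prod_const_one, mul_one]

lemma sum_hasBothSigns_pow_card_filter_eq_zero [Fintype ι] [DecidableEq ι] {R : Type*}
    [CommRing R] (x : R) :
    ∑ σ : ι → SignType with HasBothSigns σ, x ^ #{i | σ i = 0}
      = (x + 2) ^ Fintype.card ι - 2 * (x + 1) ^ Fintype.card ι + x ^ Fintype.card ι := by
  set A := Fintype.piFinset fun _ : ι => ({0, -1} : Finset SignType)
  set B := Fintype.piFinset fun _ : ι => ({0, 1} : Finset SignType)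
  have hnot : ({σ | ¬ HasBothSigns σ} : Finset (ι → SignType)) = A ∪ B := by
    ext σ
    simp only [HasBothSigns, mem_filter, mem_univ, true_and, mem_union, A, B,
      Fintype.mem_piFinset, not_and_or, not_exists]
    refine or_congr (forall_congr' fun i => ?_) (forall_congr' fun i => ?_) <;>
      cases σ i <;> decide
  have hinter : A ∩ B = Fintype.piFinset fun _ : ι => ({0} : Finset SignType) := by
    rw [← Fintype.piFinset_inter]
    rfl
  have hunion := sum_union_inter (s₁ := A) (s₂ := B) (f := fun σ => x ^ #{i | σ i = 0})
  have hsplit := sum_filter_add_sum_filter_not (univ : Finset (ι → SignType)) HasBothSigns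
    fun σ => x ^ #{i | σ i = 0}
  rw [hnot] at hsplit
  rw [hinter] at hunion
  have hall : ∑ σ : ι → SignType, x ^ #{i | σ i = 0} = (x + 2) ^ Fintype.card ι := by
    rw [← Fintype.piFinset_univ, sum_piFinset_pow_card_filter_eq_zero,
      show (univ : Finset SignType) = {0, -1, 1} from rfl, sum_insert (by decide),
      sum_pair (by decide)]
    rw [if_pos rfl, if_neg (by decide : (-1 : SignType) ≠ 0),
      if_neg (by decide : (1 : SignType) ≠ 0)]
    ring
  have hA : ∑ σ ∈ A, x ^ #{i | σ i = 0} = (x + 1) ^ Fintype.card ι := by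
    rw [sum_piFinset_pow_card_filter_eq_zero, sum_pair (by decide),
      if_neg (by decide : (-1 : SignType) ≠ 0), if_pos rfl]
  have hB : ∑ σ ∈ B, x ^ #{i | σ i = 0} = (x + 1) ^ Fintype.card ι := by
    rw [sum_piFinset_pow_card_filter_eq_zero, sum_pair (by decide),
      if_neg (by decide : (1 : SignType) ≠ 0), if_pos rfl]
  have hC : ∑ σ ∈ Fintype.piFinset fun _ : ι => ({0} : Finset SignType), x ^ #{i | σ i = 0}
      = x ^ Fintype.card ι := by
    rw [sum_piFinset_pow_card_filter_eq_zero, sum_singleton, if_pos rfl]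
  linear_combination hsplit - hunion + hall - hA - hB + hC

end SignVectors

lemma sum_range_card_filter_mul_pow {α R : Type*} [Fintype α] [CommSemiring R] (p : α → Prop)
    [DecidablePred p] (g : α → ℕ) (x : R) {N : ℕ} (hg : ∀ a, p a → g a < N) :
    ∑ k ∈ range N, (#{a | p a ∧ g a = k} : R) * x ^ k = ∑ a with p a, x ^ g a := by
  rw [← sum_fiberwise_of_maps_to (g := g) (t := range N)
    fun a ha => mem_range.2 (hg a (mem_filter.1 ha).2)]
  refine sum_congr rfl fun k _ => ?_
  rw [filter_filter, sum_congr rfl fun a ha => by rw [(mem_filter.1 ha).2.2], sum_const,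
    nsmul_eq_mul]

section CycleGraph

variable {n : ℕ}

variable (n) in
/-- `σ = 0` indexes the whole zonotope, which loses one dimension to `ker (cycleDiff n)`. -/
def cycleFaceDim (σ : Fin n → SignType) : ℕ :=
  if σ = 0 then n - 1 else #{i | σ i = 0}

lemma cycleFaceDim_lt [NeZero n] {σ : Fin n → SignType} (hσ : σ = 0 ∨ HasBothSigns σ) :
    cycleFaceDim n σ < n := by
  rcases hσ with rfl | hσ
  · simpa [cycleFaceDim] using NeZero.pos n
  · rw [cycleFaceDim, if_neg hσ.ne_zero]
    obtain ⟨⟨p, hp⟩, -⟩ := hσ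
    exact (card_lt_card (filter_ssubset.2 ⟨p, mem_univ p, by simp [hp]⟩)).trans_eq (card_fin n)

lemma sum_pow_cycleFaceDim {R : Type*} [CommRing R] (x : R) :
    ∑ σ : Fin n → SignType with σ = 0 ∨ HasBothSigns σ, x ^ cycleFaceDim n σ
      = x ^ (n - 1) + ((x + 2) ^ n - 2 * (x + 1) ^ n + x ^ n) := by
  rw [filter_or, sum_union (disjoint_filter.2 fun σ _ h hσ => hσ.ne_zero h), filter_eq',
    if_pos (mem_univ _), sum_singleton, cycleFaceDim, if_pos rfl,
    sum_congr rfl fun σ hσ => by rw [cycleFaceDim, if_neg (mem_filter.1 hσ).2.ne_zero],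
    sum_hasBothSigns_pow_card_filter_eq_zero, Fintype.card_fin]

variable [NeZero n]

variable (n) in
/-- `t w` is the coefficient of the edge `{w, w + 1}` of `C_n`:
`cycleDiff n t = ∑ w, t w • (e (w + 1) - e w)`. -/
def cycleDiff : (Fin n → ℝ) →ₗ[ℝ] (Fin n → ℝ) where
  toFun t w := t (w - 1) - t w
  map_add' s t := by funext w; simp only [Pi.add_apply]; ring
  map_smul' c t := by funext w; simp only [Pi.smul_apply, smul_eq_mul, RingHom.id_apply]; ring

lemma cycleDiff_apply (t : Fin n → ℝ) (w : Fin n) : cycleDiff n t w = t (w - 1) - t w := rfl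

open Fin.NatCast in
lemma mem_ker_cycleDiff_iff {t : Fin n → ℝ} :
    t ∈ LinearMap.ker (cycleDiff n) ↔ ∀ i, t i = t 0 := by
  refine ⟨fun h => ?_, fun h => funext fun w => by rw [cycleDiff_apply, h, h w, sub_self]; rfl⟩
  have hstep : ∀ k : ℕ, t ((k + 1 : ℕ) : Fin n) = t (k : Fin n) := fun k => by
    have := congr_fun (LinearMap.mem_ker.1 h) ((k + 1 : ℕ) : Fin n)
    rw [cycleDiff_apply, Nat.cast_succ, add_sub_cancel_right, Pi.zero_apply] at this
    rw [Nat.cast_succ]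
    exact (sub_eq_zero.1 this).symm
  have hconst : ∀ k : ℕ, t (k : Fin n) = t 0 := fun k => by
    induction k with
    | zero => rw [Nat.cast_zero]
    | succ k ih => rw [hstep, ih]
  exact fun i => Fin.cast_val_eq_self i ▸ hconst i

lemma dotProduct_eq_zero_on_ker_cycleDiff_iff (a : Fin n → ℝ) :
    (∀ t ∈ LinearMap.ker (cycleDiff n), a ⬝ᵥ t = 0) ↔ ∑ i, a i = 0 := by
  refine ⟨fun h => ?_, fun h t ht => ?_⟩
  · simpa [dotProduct] using h (fun _ => 1) (mem_ker_cycleDiff_iff.2 fun _ => rfl)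
  · rw [dotProduct, funext (mem_ker_cycleDiff_iff.1 ht), ← sum_mul, h, zero_mul]

lemma ker_cycleDiff : LinearMap.ker (cycleDiff n) = ℝ ∙ fun _ => 1 := by
  ext t
  rw [mem_ker_cycleDiff_iff, Submodule.mem_span_singleton]
  refine ⟨fun h => ⟨t 0, funext fun i => by simp [h i]⟩, ?_⟩
  rintro ⟨c, rfl⟩ i
  rfl

lemma finrank_range_cycleDiff : Module.finrank ℝ (LinearMap.range (cycleDiff n)) = n - 1 := by
  have := (cycleDiff n).finrank_range_add_finrank_ker
  rw [ker_cycleDiff, finrank_span_singleton (Function.ne_iff.2 ⟨0, one_ne_zero⟩),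
    Module.finrank_fin_fun] at this
  omega

lemma Fin.one_add_one_ne_zero_of_three_le (hn : 3 ≤ n) : (1 : Fin n) + 1 ≠ 0 := by
  rw [Ne, Fin.ext_iff, Fin.val_add, Fin.val_one', Nat.mod_eq_of_lt (by omega : 1 < n),
    Nat.mod_eq_of_lt (by omega : 1 + 1 < n)]
  simp

lemma Fin.add_one_ne_sub_one_of_three_le (hn : 3 ≤ n) (w : Fin n) : w + 1 ≠ w - 1 := fun h =>
  Fin.one_add_one_ne_zero_of_three_le hn <| add_left_cancel (a := w) <| by
    rw [← add_assoc, h, sub_add_cancel, add_zero]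

lemma cycleGraph_adj_iff (hn : 3 ≤ n) {u v : Fin n} :
    (SimpleGraph.cycleGraph n).Adj u v ↔ u = v + 1 ∨ v = u + 1 := by
  obtain ⟨m, rfl⟩ : ∃ m, n = m + 2 := ⟨n - 2, by omega⟩
  rw [SimpleGraph.cycleGraph_adj, sub_eq_iff_eq_add, sub_eq_iff_eq_add, add_comm 1 v,
    add_comm 1 u]

theorem graphicalZonotope_cycleGraph (hn : 3 ≤ n) :
    graphicalZonotope (SimpleGraph.cycleGraph n) = cycleDiff n '' cubeFace 0 := by
  ext x
  constructor
  · rintro ⟨c, hanti, hsupp, hbd, rfl⟩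
    refine ⟨fun i => c (i + 1) i, ⟨fun i => hbd _ _, fun i h => absurd rfl h⟩, funext fun w => ?_⟩
    have hnbr : ∀ u ∉ ({w - 1, w + 1} : Finset (Fin n)), c w u = 0 := fun u hu => by
      refine hsupp _ _ fun hadj => ?_
      simp only [mem_insert, mem_singleton, not_or] at hu
      rcases (cycleGraph_adj_iff hn).1 hadj with h | h
      · exact hu.1 (eq_sub_of_add_eq h.symm)
      · exact hu.2 h
    rw [cycleDiff_apply, ← sum_subset (subset_univ _) fun u _ hu => hnbr u hu,
      sum_pair (Fin.add_one_ne_sub_one_of_three_le hn w).symm, sub_add_cancel, hanti (w + 1) w]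
    ring
  · rintro ⟨t, ⟨hbd, -⟩, rfl⟩
    refine ⟨fun u v => (if u = v + 1 then t v else 0) - (if v = u + 1 then t u else 0),
      fun u v => by ring, fun u v hnadj => ?_, fun u v => ?_, ?_⟩
    · rw [cycleGraph_adj_iff hn, not_or] at hnadj
      simp [hnadj.1, hnadj.2]
    · dsimp only
      by_cases h₁ : u = v + 1 <;> by_cases h₂ : v = u + 1
      · refine absurd (add_left_cancel (a := u) ?_) (Fin.one_add_one_ne_zero_of_three_le hn)
        rw [← add_assoc, ← h₂, ← h₁, add_zero]
      · rw [if_pos h₁, if_neg h₂, sub_zero]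
        exact hbd v
      · rw [if_neg h₁, if_pos h₂, zero_sub, abs_neg]
        exact hbd u
      · simp [h₁, h₂]
    · funext w
      have hpred : ∀ u, w = u + 1 ↔ u = w - 1 := fun u => by rw [eq_sub_iff_add_eq, eq_comm]
      simp only [sum_sub_distrib, hpred, sum_ite_eq', mem_univ, if_true, cycleDiff_apply]

theorem nonempty_isExposed_cycleDiff_image_iff {F : Set (Fin n → ℝ)} :
    F.Nonempty ∧ IsExposed ℝ (cycleDiff n '' cubeFace 0) F ↔
      ∃ σ, (σ = 0 ∨ HasBothSigns σ) ∧ F = cycleDiff n '' cubeFace σ := by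
  simp_rw [nonempty_isExposed_image_cube_iff, dotProduct_eq_zero_on_ker_cycleDiff_iff,
    ← exists_sum_eq_zero_sign_eq_iff]
  constructor
  · rintro ⟨a, ha, rfl⟩
    exact ⟨_, ⟨a, ha, rfl⟩, rfl⟩
  · rintro ⟨_, ⟨a, ha, rfl⟩, rfl⟩
    exact ⟨a, ha, rfl⟩

lemma exists_add_const_mem_of_cycleDiff_mem_image {S : Set (Fin n → ℝ)} {t : Fin n → ℝ}
    (h : cycleDiff n t ∈ cycleDiff n '' S) : ∃ c : ℝ, (fun i => t i + c) ∈ S := by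
  obtain ⟨s, hs, hst⟩ := h
  have hker : s - t ∈ LinearMap.ker (cycleDiff n) := by
    rw [LinearMap.mem_ker, map_sub, hst, sub_self]
  refine ⟨s 0 - t 0, ?_⟩
  convert hs using 1
  funext i
  have := mem_ker_cycleDiff_iff.1 hker i
  simp only [Pi.sub_apply] at this
  linarith

/-- A face with both signs pins a coordinate at `1` and one at `-1`, so no nonzero constant can
be added to a point of the cube while staying on it. -/
lemma eq_of_image_cubeFace_eq {σ τ : Fin n → SignType} (hτ : HasBothSigns τ)
    (h : cycleDiff n '' cubeFace σ = cycleDiff n '' cubeFace τ) (i : Fin n) (hi : τ i ≠ 0) :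
    σ i = τ i := by
  obtain ⟨⟨p, hp⟩, ⟨m, hm⟩⟩ := hτ
  obtain ⟨c, hbd, hpin⟩ := exists_add_const_mem_of_cycleDiff_mem_image
    (h ▸ Set.mem_image_of_mem (cycleDiff n) (cast_mem_cubeFace σ))
  have hc : c = 0 := by
    have hcp := hpin p (by simp [hp])
    have hcm := hpin m (by simp [hm])
    simp only [hp, hm, SignType.coe_one, SignType.coe_neg] at hcp hcm
    linarith [abs_le.1 ((cast_mem_cubeFace σ).1 p), abs_le.1 ((cast_mem_cubeFace σ).1 m)]
  refine SignType.cast_real_injective ?_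
  simpa [hc] using hpin i hi

lemma injOn_image_cubeFace :
    Set.InjOn (fun σ => cycleDiff n '' cubeFace σ) {σ | σ = 0 ∨ HasBothSigns σ} := by
  rintro σ (rfl | hσ) τ (rfl | hτ) h
  · rfl
  · refine (hτ.ne_zero (funext fun i => by_contra fun hi => hi ?_)).elim
    exact (eq_of_image_cubeFace_eq hτ h i hi).symm
  · refine (hσ.ne_zero (funext fun i => by_contra fun hi => hi ?_)).elim
    exact (eq_of_image_cubeFace_eq hσ h.symm i hi).symm
  · funext i
    by_cases hτi : τ i = 0
    · by_cases hσi : σ i = 0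
      · rw [hσi, hτi]
      · exact (eq_of_image_cubeFace_eq hσ h.symm i hσi).symm
    · exact eq_of_image_cubeFace_eq hτ h i hτi

lemma disjoint_vectorSpan_cubeFace_ker_cycleDiff {σ : Fin n → SignType} (hσ : σ ≠ 0) :
    Disjoint (vectorSpan ℝ (cubeFace σ)) (LinearMap.ker (cycleDiff n)) := by
  rw [Submodule.disjoint_def, vectorSpan_cubeFace]
  intro v hv hker
  obtain ⟨j, hj⟩ := Function.ne_iff.1 hσ
  have hvj : v j = 0 := by
    simp only [Submodule.mem_iInf, LinearMap.mem_ker, LinearMap.coe_proj, Function.eval] at hv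
    exact hv j hj
  have hconst := mem_ker_cycleDiff_iff.1 hker
  exact funext fun i => by rw [hconst i, ← hconst j, hvj]; rfl

theorem finrank_direction_affineSpan_image_cubeFace (σ : Fin n → SignType) :
    Module.finrank ℝ (affineSpan ℝ (cycleDiff n '' cubeFace σ)).direction = cycleFaceDim n σ := by
  have hmap : vectorSpan ℝ (cycleDiff n '' cubeFace σ)
      = (vectorSpan ℝ (cubeFace σ)).map (cycleDiff n) := by
    rw [← (cycleDiff n).coe_toAffineMap, ← AffineMap.map_vectorSpan]
    rfl
  rw [direction_affineSpan, hmap, cycleFaceDim]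
  split_ifs with hσ
  · subst hσ
    have htop : vectorSpan ℝ (cubeFace (0 : Fin n → SignType)) = ⊤ := by
      refine Submodule.eq_top_of_finrank_eq ?_
      rw [finrank_vectorSpan_cubeFace]
      simp
    rw [htop, Submodule.map_top, finrank_range_cycleDiff]
  · rw [← LinearMap.range_domRestrict, LinearMap.finrank_range_of_inj
      (LinearMap.injective_domRestrict_iff.2 (disjoint_vectorSpan_cubeFace_ker_cycleDiff hσ)),
      finrank_vectorSpan_cubeFace]

lemma faceCount_cycleGraph (hn : 3 ≤ n) (k : ℕ) :
    faceCount (SimpleGraph.cycleGraph n) k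
      = #{σ : Fin n → SignType | (σ = 0 ∨ HasBothSigns σ) ∧ cycleFaceDim n σ = k} := by
  have hfaces : {F | F.Nonempty ∧ IsExposed ℝ (graphicalZonotope (SimpleGraph.cycleGraph n)) F ∧
      Module.finrank ℝ (affineSpan ℝ F).direction = k}
      = (fun σ => cycleDiff n '' cubeFace σ) ''
          ↑({σ | (σ = 0 ∨ HasBothSigns σ) ∧ cycleFaceDim n σ = k} : Finset (Fin n → SignType)) := by
    ext F
    simp only [Set.mem_ofPred_eq, graphicalZonotope_cycleGraph hn, ← and_assoc,
      nonempty_isExposed_cycleDiff_image_iff, coe_filter, Set.mem_image, mem_univ, true_and]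
    constructor
    · rintro ⟨⟨σ, hσ, rfl⟩, hdim⟩
      exact ⟨σ, ⟨hσ, finrank_direction_affineSpan_image_cubeFace σ ▸ hdim⟩, rfl⟩
    · rintro ⟨σ, ⟨hσ, hdim⟩, rfl⟩
      exact ⟨⟨σ, hσ, rfl⟩, finrank_direction_affineSpan_image_cubeFace σ ▸ hdim⟩
  rw [faceCount, ← Set.coe_ofPred, Nat.card_coe_set_eq, hfaces,
    Set.InjOn.ncard_image (injOn_image_cubeFace.mono fun σ hσ => by simp_all), Set.ncard_coe_finset]

end CycleGraph

/-- `f(Z_{C_n}, q) = q^n + q^{n-1} + (q+2)^n - 2(q+1)^n`. -/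
theorem fPolynomial_graphicalZonotope_cycleGraph (n : ℕ) (hn : 3 ≤ n) :
    ∑ k ∈ Finset.range n, (faceCount (SimpleGraph.cycleGraph n) k : Polynomial ℤ) * X ^ k
      = X ^ n + X ^ (n - 1) + (X + 2) ^ n - 2 * (X + 1) ^ n := by
  have : NeZero n := ⟨by omega⟩
  simp_rw [faceCount_cycleGraph hn]
  rw [sum_range_card_filter_mul_pow _ _ _ fun _ => cycleFaceDim_lt, sum_pow_cycleFaceDim]
  ring
end

section
/- Let Γ be a finite simple graph on vertex set V, let v ∈ V, and let A, B ⊆ V satisfy A ∪ B = V and A ∩ B = {v}, such that every edge of Γ has both endpoints in A or both endpoints in B (Γ is the wedge of Γ₁ := Γ|_A and Γ₂ := Γ|_B at v). Assume Γ₁ and Γ₂ are connected, with |A| = a ≥ 1 and |B| = b ≥ 1. Then Σ_{k=0}^{a+b−2} f_k(Z_Γ)·q^k = (Σ_{k=0}^{a−1} f_k(Z_{Γ₁})·q^k) · (Σ_{k=0}^{b−1} f_k(Z_{Γ₂})·q^k), as an identity in ℤ[q]. -/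
/-!
Every edge of `G` lies inside `A` or inside `B`, so the graphical zonotope of `G` is the
Minkowski sum of the zonotopes of `G[A]` and `G[B]`, embedded in `ℝ^V` by extension by zero.
The two summands lie in the images of the sum-zero hyperplanes of `ℝ^A` and `ℝ^B`, which meet
only in `0` because `A ∩ B = {v}`. For a Minkowski sum of sets lying in independent subspaces,
a functional is maximized on the sum exactly on the sum of the faces it maximizes on the
summands, and any two functionals on the summands glue to one functional on the whole space.
Hence the nonempty exposed faces of the sum correspond bijectively to pairs of faces of the
summands, with dimensions adding, and the `f`-polynomial is multiplicative. The face sets are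
finite because the face maximizing `ℓ` depends only on the signs of `ℓ(e_u) - ℓ(e_w)` along
the edges `uw`.
-/

open Polynomial

open Function Pointwise

section ExposedFaces

/-- The nonempty exposed faces of `K` (`IsExposed` also admits `∅`). -/
abbrev ExposedFace {E : Type*} [AddCommGroup E] [Module ℝ E] [TopologicalSpace E] (K : Set E) :
    Type _ :=
  {C : Set E // C.Nonempty ∧ IsExposed ℝ K C}

noncomputable def ExposedFace.dim {E : Type*} [AddCommGroup E] [Module ℝ E] [TopologicalSpace E]
    {K : Set E} (C : ExposedFace K) : ℕ :=
  Module.finrank ℝ (vectorSpan ℝ C.1)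

variable {E F : Type*} [NormedAddCommGroup E] [NormedSpace ℝ E] [NormedAddCommGroup F]
  [NormedSpace ℝ F]

theorem ContinuousLinearMap.toExposed_add (l : StrongDual ℝ E) (K₁ K₂ : Set E) :
    l.toExposed (K₁ + K₂) = l.toExposed K₁ + l.toExposed K₂ := by
  ext x
  constructor
  · rintro ⟨⟨x₁, hx₁, x₂, hx₂, rfl⟩, hmax⟩
    refine ⟨x₁, ⟨hx₁, fun z hz => ?_⟩, x₂, ⟨hx₂, fun z hz => ?_⟩, rfl⟩
    · simpa using hmax (z + x₂) (Set.add_mem_add hz hx₂)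
    · simpa using hmax (x₁ + z) (Set.add_mem_add hx₁ hz)
  · rintro ⟨x₁, ⟨hx₁, hmax₁⟩, x₂, ⟨hx₂, hmax₂⟩, rfl⟩
    refine ⟨Set.add_mem_add hx₁ hx₂, ?_⟩
    rintro _ ⟨z₁, hz₁, z₂, hz₂, rfl⟩
    simpa using add_le_add (hmax₁ z₁ hz₁) (hmax₂ z₂ hz₂)

theorem ContinuousLinearMap.toExposed_congr {l m : StrongDual ℝ E} {K : Set E}
    (h : Set.EqOn l m K) : l.toExposed K = m.toExposed K := by
  ext x
  refine and_congr_right fun hx => forall₂_congr fun y hy => ?_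
  rw [h hx, h hy]

theorem ContinuousLinearMap.toExposed_image (e : E →ₗ[ℝ] F) {l : StrongDual ℝ E}
    {m : StrongDual ℝ F} (hml : ∀ x, m (e x) = l x) (K : Set E) :
    m.toExposed (e '' K) = e '' l.toExposed K := by
  ext x
  simp only [ContinuousLinearMap.toExposed, Set.mem_ofPred_eq, Set.mem_image]
  constructor
  · rintro ⟨⟨z, hz, rfl⟩, hmax⟩
    exact ⟨z, ⟨hz, by simpa [hml] using hmax⟩, rfl⟩
  · rintro ⟨z, ⟨hz, hmax⟩, rfl⟩
    exact ⟨⟨z, hz, rfl⟩, by simpa [hml] using hmax⟩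

theorem finrank_vectorSpan_image {e : E →ₗ[ℝ] F} (he : Injective e) (s : Set E) :
    Module.finrank ℝ (vectorSpan ℝ (e '' s)) = Module.finrank ℝ (vectorSpan ℝ s) := by
  rw [← LinearMap.coe_toAffineMap, ← AffineMap.map_vectorSpan, LinearMap.toAffineMap_linear]
  exact (Submodule.equivMapOfInjective e he _).finrank_eq.symm

theorem vectorSpan_add {s t : Set E} (hs : s.Nonempty) (ht : t.Nonempty) :
    vectorSpan ℝ (s + t) = vectorSpan ℝ s ⊔ vectorSpan ℝ t := by
  refine le_antisymm ?_ (sup_le ?_ ?_)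
  · rw [vectorSpan_def, Submodule.span_le]
    rintro _ ⟨_, ⟨p₁, hp₁, p₂, hp₂, rfl⟩, _, ⟨q₁, hq₁, q₂, hq₂, rfl⟩, rfl⟩
    change (p₁ + p₂) - (q₁ + q₂) ∈ _
    rw [add_sub_add_comm]
    exact Submodule.add_mem_sup (vsub_mem_vectorSpan ℝ hp₁ hq₁) (vsub_mem_vectorSpan ℝ hp₂ hq₂)
  · obtain ⟨y, hy⟩ := ht
    rw [← vectorSpan_vadd ℝ s y]
    refine vectorSpan_mono ℝ ?_
    rintro _ ⟨x, hx, rfl⟩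
    exact ⟨x, hx, y, hy, add_comm x y⟩
  · obtain ⟨x, hx⟩ := hs
    rw [← vectorSpan_vadd ℝ t x]
    exact vectorSpan_mono ℝ (Set.vadd_set_subset_add hx)

theorem vectorSpan_le_of_subset {p : Submodule ℝ E} {s : Set E} (h : s ⊆ p) :
    vectorSpan ℝ s ≤ p :=
  (vectorSpan_mono ℝ h).trans_eq p.toAffineSubspace_direction

theorem Set.subset_of_add_eq_add_of_disjoint {U₁ U₂ : Submodule ℝ E} (hU : Disjoint U₁ U₂)
    {s s' t t' : Set E} (hs : s ⊆ U₁) (hs' : s' ⊆ U₁) (ht : t ⊆ U₂) (ht' : t' ⊆ U₂)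
    (hne : t.Nonempty) (h : s + t = s' + t') : s ⊆ s' := by
  intro x hx
  obtain ⟨y, hy⟩ := hne
  obtain ⟨x', hx', y', hy', hxy⟩ : x + y ∈ s' + t' := h ▸ Set.add_mem_add hx hy
  have hdiff : x - x' = y' - y := by
    rw [sub_eq_sub_iff_add_eq_add, add_comm y']; exact hxy.symm
  have : x - x' = 0 :=
    Submodule.disjoint_def.1 hU _ (U₁.sub_mem (hs hx) (hs' hx'))
      (hdiff ▸ U₂.sub_mem (ht' hy') (ht hy))
  rwa [sub_eq_zero.1 this]

theorem Set.eq_of_add_eq_add_of_disjoint {U₁ U₂ : Submodule ℝ E} (hU : Disjoint U₁ U₂)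
    {s s' t t' : Set E} (hs : s ⊆ U₁) (hs' : s' ⊆ U₁) (ht : t ⊆ U₂) (ht' : t' ⊆ U₂)
    (hne : t.Nonempty) (hne' : t'.Nonempty) (h : s + t = s' + t') : s = s' :=
  (subset_of_add_eq_add_of_disjoint hU hs hs' ht ht' hne h).antisymm
    (subset_of_add_eq_add_of_disjoint hU hs' hs ht' ht hne' h.symm)

theorem exists_strongDual_eqOn_of_disjoint [FiniteDimensional ℝ E] {U₁ U₂ : Submodule ℝ E}
    (hU : Disjoint U₁ U₂) (m₁ m₂ : StrongDual ℝ E) :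
    ∃ l : StrongDual ℝ E, Set.EqOn l m₁ U₁ ∧ Set.EqOn l m₂ U₂ := by
  let f₁ : E →ₗ.[ℝ] ℝ := ⟨U₁, m₁.toLinearMap ∘ₗ U₁.subtype⟩
  let f₂ : E →ₗ.[ℝ] ℝ := ⟨U₂, m₂.toLinearMap ∘ₗ U₂.subtype⟩
  have H := LinearPMap.sup_h_of_disjoint f₁ f₂ hU
  obtain ⟨g, hg⟩ := (f₁.sup f₂ H).toFun.exists_extend
  have hg' (z : (f₁.sup f₂ H).domain) : g z = f₁.sup f₂ H z := LinearMap.congr_fun hg z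
  refine ⟨LinearMap.toContinuousLinearMap g, fun x hx => ?_, fun x hx => ?_⟩
  · exact (hg' ⟨x, Submodule.mem_sup_left hx⟩).trans
      ((f₁.left_le_sup f₂ H).2 (x := ⟨x, hx⟩) rfl).symm
  · exact (hg' ⟨x, Submodule.mem_sup_right hx⟩).trans
      ((f₁.right_le_sup f₂ H).2 (x := ⟨x, hx⟩) rfl).symm

theorem IsExposed.image [FiniteDimensional ℝ F] {e : E →ₗ[ℝ] F} (he : Injective e)
    {K C : Set E} (h : IsExposed ℝ K C) : IsExposed ℝ (e '' K) (e '' C) := by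
  intro hne
  obtain ⟨l, rfl⟩ := h hne.of_image
  obtain ⟨g, hg⟩ := e.exists_leftInverse_of_injective (LinearMap.ker_eq_bot.2 he)
  refine ⟨LinearMap.toContinuousLinearMap (l.toLinearMap ∘ₗ g), ?_⟩
  refine (ContinuousLinearMap.toExposed_image e (fun x => ?_) K).symm
  simp [← LinearMap.comp_apply g e, hg]

theorem IsExposed.preimage [FiniteDimensional ℝ E] {e : E →ₗ[ℝ] F} (he : Injective e)
    {K : Set E} {D : Set F} (h : IsExposed ℝ (e '' K) D) : IsExposed ℝ K (e ⁻¹' D) := by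
  intro hne
  obtain ⟨m, rfl⟩ := h (hne.image e |>.mono (Set.image_preimage_subset e D))
  refine ⟨m.comp (LinearMap.toContinuousLinearMap e), ?_⟩
  change e ⁻¹' m.toExposed (e '' K) = _
  rw [ContinuousLinearMap.toExposed_image e (l := m.comp (LinearMap.toContinuousLinearMap e))
    (fun _ => rfl), Set.preimage_image_eq _ he]
  rfl

def ExposedFace.image [FiniteDimensional ℝ F] {e : E →ₗ[ℝ] F} (he : Injective e) {K : Set E}
    (C : ExposedFace K) : ExposedFace (e '' K) :=
  ⟨e '' C.1, C.2.1.image e, C.2.2.image he⟩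

theorem ExposedFace.bijective_image [FiniteDimensional ℝ E] [FiniteDimensional ℝ F]
    {e : E →ₗ[ℝ] F} (he : Injective e) (K : Set E) :
    Bijective (ExposedFace.image he (K := K)) := by
  refine ⟨fun C C' h => Subtype.ext (Set.image_injective.2 he (congrArg Subtype.val h)), ?_⟩
  rintro ⟨D, hne, hD⟩
  have hDe : D ⊆ Set.range e := hD.subset.trans (Set.image_subset_range e K)
  exact ⟨⟨e ⁻¹' D, hne.preimage' hDe, hD.preimage he⟩,
    Subtype.ext (Set.image_preimage_eq_of_subset hDe)⟩

theorem ExposedFace.dim_image [FiniteDimensional ℝ F] {e : E →ₗ[ℝ] F} (he : Injective e)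
    {K : Set E} (C : ExposedFace K) : (C.image he).dim = C.dim :=
  finrank_vectorSpan_image he C.1

theorem finrank_vectorSpan_add [FiniteDimensional ℝ E] {U₁ U₂ : Submodule ℝ E}
    (hU : Disjoint U₁ U₂) {s t : Set E} (hs : s.Nonempty) (ht : t.Nonempty)
    (hsU : s ⊆ U₁) (htU : t ⊆ U₂) :
    Module.finrank ℝ (vectorSpan ℝ (s + t))
      = Module.finrank ℝ (vectorSpan ℝ s) + Module.finrank ℝ (vectorSpan ℝ t) := by
  have hdisj : vectorSpan ℝ s ⊓ vectorSpan ℝ t = ⊥ :=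
    (hU.mono (vectorSpan_le_of_subset hsU) (vectorSpan_le_of_subset htU)).eq_bot
  have := Submodule.finrank_sup_add_finrank_inf_eq (vectorSpan ℝ s) (vectorSpan ℝ t)
  rw [hdisj, finrank_bot, add_zero] at this
  rw [vectorSpan_add hs ht, this]

variable [FiniteDimensional ℝ E] {U₁ U₂ : Submodule ℝ E} {K₁ K₂ : Set E}

theorem IsExposed.add (hU : Disjoint U₁ U₂) (hK₁ : K₁ ⊆ U₁) (hK₂ : K₂ ⊆ U₂) {C₁ C₂ : Set E}
    (h₁ : IsExposed ℝ K₁ C₁) (h₂ : IsExposed ℝ K₂ C₂) : IsExposed ℝ (K₁ + K₂) (C₁ + C₂) := by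
  intro hne
  obtain ⟨m₁, rfl⟩ := h₁ hne.of_add_left
  obtain ⟨m₂, rfl⟩ := h₂ hne.of_add_right
  obtain ⟨l, hl₁, hl₂⟩ := exists_strongDual_eqOn_of_disjoint hU m₁ m₂
  refine ⟨l, ?_⟩
  change m₁.toExposed K₁ + m₂.toExposed K₂ = l.toExposed (K₁ + K₂)
  rw [l.toExposed_add, l.toExposed_congr (hl₁.mono hK₁), l.toExposed_congr (hl₂.mono hK₂)]

def ExposedFace.add (hU : Disjoint U₁ U₂) (hK₁ : K₁ ⊆ U₁) (hK₂ : K₂ ⊆ U₂)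
    (C : ExposedFace K₁ × ExposedFace K₂) : ExposedFace (K₁ + K₂) :=
  ⟨C.1.1 + C.2.1, C.1.2.1.add C.2.2.1, C.1.2.2.add hU hK₁ hK₂ C.2.2.2⟩

theorem ExposedFace.bijective_add (hU : Disjoint U₁ U₂) (hK₁ : K₁ ⊆ U₁) (hK₂ : K₂ ⊆ U₂) :
    Bijective (ExposedFace.add hU hK₁ hK₂) := by
  refine ⟨?_, ?_⟩
  · rintro ⟨⟨C₁, hC₁, hC₁e⟩, ⟨C₂, hC₂, hC₂e⟩⟩ ⟨⟨C₁', hC₁', hC₁e'⟩, ⟨C₂', hC₂', hC₂e'⟩⟩ h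
    have h : C₁ + C₂ = C₁' + C₂' := congrArg Subtype.val h
    have s₁ := hC₁e.subset.trans hK₁
    have s₁' := hC₁e'.subset.trans hK₁
    have s₂ := hC₂e.subset.trans hK₂
    have s₂' := hC₂e'.subset.trans hK₂
    ext1
    · exact Subtype.ext (Set.eq_of_add_eq_add_of_disjoint hU s₁ s₁' s₂ s₂' hC₂ hC₂' h)
    · refine Subtype.ext (Set.eq_of_add_eq_add_of_disjoint hU.symm s₂ s₂' s₁ s₁' hC₁ hC₁' ?_)
      rwa [add_comm C₂, add_comm C₂']
  · rintro ⟨C, hne, hC⟩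
    obtain ⟨l, rfl⟩ := hC hne
    have hsplit := l.toExposed_add K₁ K₂
    have hne' : (l.toExposed K₁ + l.toExposed K₂).Nonempty := by rw [← hsplit]; exact hne
    refine ⟨⟨⟨l.toExposed K₁, ?_, ContinuousLinearMap.toExposed.isExposed⟩,
      ⟨l.toExposed K₂, ?_, ContinuousLinearMap.toExposed.isExposed⟩⟩, Subtype.ext hsplit.symm⟩
    exacts [hne'.of_add_left, hne'.of_add_right]

theorem ExposedFace.dim_add (hU : Disjoint U₁ U₂) (hK₁ : K₁ ⊆ U₁) (hK₂ : K₂ ⊆ U₂)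
    (C : ExposedFace K₁ × ExposedFace K₂) :
    (ExposedFace.add hU hK₁ hK₂ C).dim = C.1.dim + C.2.dim :=
  finrank_vectorSpan_add hU C.1.2.1 C.2.2.1 (C.1.2.2.subset.trans hK₁)
    (C.2.2.2.subset.trans hK₂)

end ExposedFaces

section FaceCounting

variable {R : Type*} [CommSemiring R]

theorem sum_range_card_fiber_mul_X_pow {S : Type*} [Fintype S] {d : S → ℕ} {N : ℕ}
    (hd : ∀ s, d s < N) :
    ∑ k ∈ Finset.range N, (Nat.card {s // d s = k} : R[X]) * X ^ k = ∑ s, (X : R[X]) ^ d s := by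
  classical
  rw [← Finset.sum_fiberwise_of_maps_to (fun s _ => Finset.mem_range.2 (hd s))]
  refine Finset.sum_congr rfl fun k _ => ?_
  rw [Finset.sum_congr rfl fun s hs => by rw [(Finset.mem_filter.1 hs).2], Finset.sum_const,
    nsmul_eq_mul, Nat.card_eq_fintype_card, Fintype.card_subtype]

theorem sum_range_card_fiber_mul_X_pow_of_bijective {S₁ S₂ S : Type*} [Finite S₁] [Finite S₂]
    {Φ : S₁ × S₂ → S} (hΦ : Bijective Φ) {d₁ : S₁ → ℕ} {d₂ : S₂ → ℕ} {d : S → ℕ}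
    (hd : ∀ p, d (Φ p) = d₁ p.1 + d₂ p.2) {a b : ℕ} (hd₁ : ∀ s, d₁ s < a)
    (hd₂ : ∀ s, d₂ s < b) :
    ∑ k ∈ Finset.range (a + b - 1), (Nat.card {s // d s = k} : R[X]) * X ^ k
      = (∑ k ∈ Finset.range a, (Nat.card {s // d₁ s = k} : R[X]) * X ^ k)
        * ∑ k ∈ Finset.range b, (Nat.card {s // d₂ s = k} : R[X]) * X ^ k := by
  have := Fintype.ofFinite S₁
  have := Fintype.ofFinite S₂
  have := Finite.of_surjective Φ hΦ.2
  have := Fintype.ofFinite S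
  have hd' (s : S) : d s < a + b - 1 := by
    obtain ⟨p, rfl⟩ := hΦ.2 s
    rw [hd]
    have := hd₁ p.1
    have := hd₂ p.2
    omega
  rw [sum_range_card_fiber_mul_X_pow hd', sum_range_card_fiber_mul_X_pow hd₁,
    sum_range_card_fiber_mul_X_pow hd₂, Finset.sum_mul_sum, ← Finset.sum_product',
    ← Fintype.sum_bijective Φ hΦ _ _ fun p => rfl]
  simp only [hd, pow_add, Finset.univ_product_univ]

end FaceCounting

section ZonotopeCoefficients

variable {V : Type} {G : SimpleGraph V}

structure IsZonotopeCoeff (G : SimpleGraph V) (c : V → V → ℝ) : Prop where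
  antisymm : ∀ u w, c u w = -c w u
  eq_zero_of_not_adj : ∀ u w, ¬G.Adj u w → c u w = 0
  abs_le_one : ∀ u w, |c u w| ≤ 1

theorem IsZonotopeCoeff.add {c₁ c₂ : V → V → ℝ} (h₁ : IsZonotopeCoeff G c₁)
    (h₂ : IsZonotopeCoeff G c₂) (h : ∀ u w, c₁ u w = 0 ∨ c₂ u w = 0) :
    IsZonotopeCoeff G (c₁ + c₂) where
  antisymm u w := by simp only [Pi.add_apply, h₁.antisymm u w, h₂.antisymm u w, neg_add]
  eq_zero_of_not_adj u w huw := by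
    simp [h₁.eq_zero_of_not_adj u w huw, h₂.eq_zero_of_not_adj u w huw]
  abs_le_one u w := by
    rcases h u w with h | h <;> simp [h, h₁.abs_le_one, h₂.abs_le_one]

theorem IsZonotopeCoeff.ite {c : V → V → ℝ} (hc : IsZonotopeCoeff G c) (p : V → V → Prop)
    [DecidableRel p] (hp : ∀ u w, p u w ↔ p w u) :
    IsZonotopeCoeff G fun u w => if p u w then c u w else 0 where
  antisymm u w := by
    by_cases h : p u w
    · simp [h, (hp u w).1 h, hc.antisymm u w]
    · simp [h, mt (hp u w).2 h]
  eq_zero_of_not_adj u w huw := by simp [hc.eq_zero_of_not_adj u w huw]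
  abs_le_one u w := by
    split_ifs
    · exact hc.abs_le_one u w
    · simp

theorem isZonotopeCoeff_induce_iff {s : Set V} {c : V → V → ℝ}
    (hc : ∀ u w, c u w ≠ 0 → u ∈ s ∧ w ∈ s) :
    IsZonotopeCoeff (G.induce s) (fun i j : s => c i j) ↔ IsZonotopeCoeff G c := by
  have hzero {u w : V} (h : ¬(u ∈ s ∧ w ∈ s)) : c u w = 0 := by_contra fun h' => h (hc u w h')
  constructor
  · intro h
    constructor
    all_goals intro u w
    all_goals by_cases huw : u ∈ s ∧ w ∈ s
    · exact h.antisymm ⟨u, huw.1⟩ ⟨w, huw.2⟩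
    · rw [hzero huw, hzero fun h' => huw h'.symm, neg_zero]
    · exact h.eq_zero_of_not_adj ⟨u, huw.1⟩ ⟨w, huw.2⟩
    · exact fun _ => hzero huw
    · exact h.abs_le_one ⟨u, huw.1⟩ ⟨w, huw.2⟩
    · simp [hzero huw]
  · intro h
    exact ⟨fun i j => h.antisymm i j, fun i j => h.eq_zero_of_not_adj i j,
      fun i j => h.abs_le_one i j⟩

noncomputable def signCoeff (G : SimpleGraph V) [DecidableRel G.Adj] (y : V → ℝ) : V → V → ℝ :=
  fun u w => if G.Adj u w then (SignType.sign (y u - y w) : ℝ) else 0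

theorem isZonotopeCoeff_signCoeff (G : SimpleGraph V) [DecidableRel G.Adj] (y : V → ℝ) :
    IsZonotopeCoeff G (signCoeff G y) where
  antisymm u w := by
    by_cases h : G.Adj u w
    · rw [signCoeff, signCoeff, if_pos h, if_pos h.symm, ← neg_sub (y w), Left.sign_neg,
        SignType.coe_neg]
    · rw [signCoeff, signCoeff, if_neg h, if_neg fun h' => h h'.symm, neg_zero]
  eq_zero_of_not_adj u w h := if_neg h
  abs_le_one u w := by
    unfold signCoeff
    split_ifs
    · cases SignType.sign (y u - y w) <;> simp
    · simp

theorem IsZonotopeCoeff.mul_sub_le [DecidableRel G.Adj] {c : V → V → ℝ}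
    (hc : IsZonotopeCoeff G c) (y : V → ℝ) (u w : V) : c u w * (y u - y w) ≤ signCoeff G y u w * (y u - y w) := by
  by_cases h : G.Adj u w
  · rw [signCoeff, if_pos h, sign_mul_self]
    refine (le_abs_self _).trans ?_
    rw [abs_mul]
    exact mul_le_of_le_one_left (abs_nonneg _) (hc.abs_le_one u w)
  · simp [signCoeff, h, hc.eq_zero_of_not_adj u w h]

theorem IsZonotopeCoeff.mul_sub_eq_iff [DecidableRel G.Adj] {c : V → V → ℝ}
    (hc : IsZonotopeCoeff G c) (y : V → ℝ) (u w : V) :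
    c u w * (y u - y w) = signCoeff G y u w * (y u - y w) ↔
      (G.Adj u w → SignType.sign (y u - y w) ≠ 0 → c u w = SignType.sign (y u - y w)) := by
  by_cases h : G.Adj u w
  · rw [signCoeff, if_pos h]
    by_cases hd : y u - y w = 0
    · simp [hd]
    · rw [mul_left_inj' hd]
      simp [h, hd]
  · simp [signCoeff, h, hc.eq_zero_of_not_adj u w h]

variable [Fintype V]

def zonotopePoint (c : V → V → ℝ) : V → ℝ :=
  fun u => ∑ w, c u w

theorem zonotopePoint_add (c₁ c₂ : V → V → ℝ) :
    zonotopePoint (c₁ + c₂) = zonotopePoint c₁ + zonotopePoint c₂ := by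
  funext u
  simp [zonotopePoint, Finset.sum_add_distrib]

theorem sum_zonotopePoint {c : V → V → ℝ} (hc : ∀ u w, c u w = -c w u) :
    ∑ u, zonotopePoint c u = 0 := by
  have h : ∑ u, ∑ w, c u w = -∑ u, ∑ w, c u w := by
    conv_lhs => rw [Finset.sum_comm]
    simp only [← Finset.sum_neg_distrib]
    exact Finset.sum_congr rfl fun w _ => Finset.sum_congr rfl fun u _ => hc u w
  exact CharZero.eq_neg_self_iff.1 h

def signFace (G : SimpleGraph V) (σ : V → V → SignType) : Set (V → ℝ) :=
  zonotopePoint '' {c | IsZonotopeCoeff G c ∧ ∀ u w, G.Adj u w → σ u w ≠ 0 → c u w = σ u w}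

variable [DecidableEq V]

theorem graphicalZonotope_eq_image :
    graphicalZonotope G = zonotopePoint '' {c | IsZonotopeCoeff G c} := by
  ext x
  constructor
  · rintro ⟨c, h₁, h₂, h₃, rfl⟩
    exact ⟨c, ⟨h₁, h₂, h₃⟩, rfl⟩
  · rintro ⟨c, ⟨h₁, h₂, h₃⟩, rfl⟩
    exact ⟨c, h₁, h₂, h₃, rfl⟩

theorem StrongDual.apply_eq_sum_mul_apply_single (ℓ : StrongDual ℝ (V → ℝ)) (x : V → ℝ) :
    ℓ x = ∑ u, x u * ℓ (Pi.single u 1) := by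
  conv_lhs => rw [← Finset.univ_sum_single x]
  simp only [map_sum]
  refine Finset.sum_congr rfl fun u _ => ?_
  rw [← smul_eq_mul, ← map_smul, ← Pi.single_smul, smul_eq_mul, mul_one]

theorem two_mul_apply_zonotopePoint (ℓ : StrongDual ℝ (V → ℝ)) {c : V → V → ℝ}
    (hc : ∀ u w, c u w = -c w u) :
    2 * ℓ (zonotopePoint c)
      = ∑ u, ∑ w, c u w * (ℓ (Pi.single u 1) - ℓ (Pi.single w 1)) := by
  have hℓ : ℓ (zonotopePoint c) = ∑ u, ∑ w, c u w * ℓ (Pi.single u 1) := by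
    rw [StrongDual.apply_eq_sum_mul_apply_single ℓ]
    simp only [zonotopePoint, Finset.sum_mul]
  have hswap : ∑ u, ∑ w, c u w * ℓ (Pi.single w 1) = -ℓ (zonotopePoint c) := by
    rw [hℓ, Finset.sum_comm, ← Finset.sum_neg_distrib]
    refine Finset.sum_congr rfl fun w _ => ?_
    rw [← Finset.sum_neg_distrib]
    exact Finset.sum_congr rfl fun u _ => by rw [hc u w, neg_mul]
  calc 2 * ℓ (zonotopePoint c) = ℓ (zonotopePoint c) - -ℓ (zonotopePoint c) := by ring
    _ = ∑ u, ∑ w, c u w * ℓ (Pi.single u 1) - ∑ u, ∑ w, c u w * ℓ (Pi.single w 1) := by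
      rw [hswap, ← hℓ]
    _ = _ := by simp only [mul_sub, Finset.sum_sub_distrib]

theorem toExposed_graphicalZonotope (ℓ : StrongDual ℝ (V → ℝ)) :
    ℓ.toExposed (graphicalZonotope G)
      = signFace G fun u w => SignType.sign (ℓ (Pi.single u 1) - ℓ (Pi.single w 1)) := by
  classical
  -- `2 ℓ (zonotopePoint c) = ∑ c u w * (y u - y w)` is maximized term by term by `cmax`; the
  -- maximizers are the `c` agreeing with `cmax` wherever `y u ≠ y w` along an edge.
  set y : V → ℝ := fun u => ℓ (Pi.single u 1)
  set cmax := signCoeff G y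
  have hcmax := isZonotopeCoeff_signCoeff G y
  have hval {c : V → V → ℝ} (hc : IsZonotopeCoeff G c) :
      2 * ℓ (zonotopePoint c) = ∑ u, ∑ w, c u w * (y u - y w) :=
    two_mul_apply_zonotopePoint ℓ hc.antisymm
  have hterm_le {c : V → V → ℝ} (hc : IsZonotopeCoeff G c) :
      ∀ u ∈ Finset.univ, ∑ w, c u w * (y u - y w) ≤ ∑ w, cmax u w * (y u - y w) :=
    fun u _ => Finset.sum_le_sum fun w _ => hc.mul_sub_le y u w
  have hle {c : V → V → ℝ} (hc : IsZonotopeCoeff G c) :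
      ℓ (zonotopePoint c) ≤ ℓ (zonotopePoint cmax) := by
    linarith [hval hc, hval hcmax, Finset.sum_le_sum (hterm_le hc)]
  have heq {c : V → V → ℝ} (hc : IsZonotopeCoeff G c) :
      ℓ (zonotopePoint c) = ℓ (zonotopePoint cmax) ↔
        ∀ u w, G.Adj u w → SignType.sign (y u - y w) ≠ 0 → c u w = SignType.sign (y u - y w) := by
    rw [← mul_right_inj' two_ne_zero, hval hc, hval hcmax,
      Finset.sum_eq_sum_iff_of_le (hterm_le hc)]
    refine forall_congr' fun u => ?_
    rw [Finset.sum_eq_sum_iff_of_le fun w _ => hc.mul_sub_le y u w]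
    simp only [Finset.mem_univ, true_imp_iff, hc.mul_sub_eq_iff]
  rw [graphicalZonotope_eq_image]
  ext x
  constructor
  · rintro ⟨⟨c, hc, rfl⟩, hmax⟩
    exact ⟨c, ⟨hc, (heq hc).1 (le_antisymm (hle hc) (hmax _ ⟨cmax, hcmax, rfl⟩))⟩, rfl⟩
  · rintro ⟨c, ⟨hc, hσ⟩, rfl⟩
    refine ⟨⟨c, hc, rfl⟩, ?_⟩
    rintro _ ⟨c', hc', rfl⟩
    exact (hle hc').trans ((heq hc).2 hσ).ge

instance : Finite (ExposedFace (graphicalZonotope G)) := by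
  refine Finite.of_injective (β := Set.range (signFace G)) (fun C => ⟨C.1, ?_⟩)
    fun C C' h => Subtype.ext (by simpa using h)
  obtain ⟨ℓ, hC⟩ := C.2.2 C.2.1
  exact ⟨_, (hC.trans (toExposed_graphicalZonotope ℓ)).symm⟩

end ZonotopeCoefficients

noncomputable def coordSum (W : Type*) [Fintype W] : (W → ℝ) →ₗ[ℝ] ℝ :=
  ∑ i, LinearMap.proj i

theorem coordSum_apply {W : Type*} [Fintype W] (x : W → ℝ) : coordSum W x = ∑ i, x i := by
  simp [coordSum]

theorem graphicalZonotope_subset_ker_coordSum {W : Type} [Fintype W] [DecidableEq W]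
    (H : SimpleGraph W) : graphicalZonotope H ⊆ LinearMap.ker (coordSum W) := by
  rw [graphicalZonotope_eq_image]
  rintro _ ⟨c, hc, rfl⟩
  exact (coordSum_apply _).trans (sum_zonotopePoint hc.antisymm)

theorem ExposedFace.dim_lt_card {W : Type} [Fintype W] [DecidableEq W] [Nonempty W]
    {H : SimpleGraph W} (C : ExposedFace (graphicalZonotope H)) : C.dim < Fintype.card W := by
  have hker : LinearMap.ker (coordSum W) ≠ ⊤ := by
    intro h
    simpa [coordSum_apply] using LinearMap.congr_fun (LinearMap.ker_eq_top.1 h) fun _ => 1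
  calc C.dim ≤ Module.finrank ℝ (LinearMap.ker (coordSum W)) :=
        Submodule.finrank_mono (vectorSpan_le_of_subset
          (C.2.2.subset.trans (graphicalZonotope_subset_ker_coordSum H)))
    _ < Module.finrank ℝ (W → ℝ) := Submodule.finrank_lt hker
    _ = Fintype.card W := Module.finrank_fintype_fun_eq_card ℝ

theorem faceCount_eq_card {W : Type} [Fintype W] [DecidableEq W] (H : SimpleGraph W) (k : ℕ) :
    faceCount H k = Nat.card {C : ExposedFace (graphicalZonotope H) // C.dim = k} :=
  Nat.card_congr
    { toFun F := ⟨⟨F.1, F.2.1, F.2.2.1⟩, by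
        rw [ExposedFace.dim, ← direction_affineSpan]
        exact F.2.2.2⟩
      invFun C := ⟨C.1.1, C.1.2.1, C.1.2.2, by rw [direction_affineSpan]; exact C.2⟩
      left_inv _ := rfl
      right_inv _ := rfl }

section ExtendByZero

variable {V : Type*} {s : Set V}

noncomputable abbrev extendByZero (s : Set V) : (s → ℝ) →ₗ[ℝ] V → ℝ :=
  Function.ExtendByZero.linearMap ℝ ((↑) : s → V)

theorem extendByZero_apply_coe (x : s → ℝ) (i : s) : extendByZero s x i = x i :=
  Subtype.val_injective.extend_apply x 0 i

theorem extendByZero_apply_of_notMem (x : s → ℝ) {w : V} (hw : w ∉ s) :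
    extendByZero s x w = 0 :=
  Function.extend_apply' _ _ _ fun ⟨i, hi⟩ => hw (hi ▸ i.2)

theorem extendByZero_injective (s : Set V) : Injective (extendByZero s) :=
  fun x x' h => funext fun i => by simpa [extendByZero_apply_coe] using congrFun h i

theorem extendByZero_restrict {f : V → ℝ} (hf : ∀ w ∉ s, f w = 0) :
    extendByZero s (fun i => f i) = f := by
  funext w
  by_cases hw : w ∈ s
  · exact extendByZero_apply_coe _ ⟨w, hw⟩
  · rw [extendByZero_apply_of_notMem _ hw, hf w hw]

theorem sum_extendByZero [Fintype V] [Fintype s] (x : s → ℝ) :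
    ∑ w, extendByZero s x w = ∑ i, x i := by
  classical
  rw [← Finset.sum_subset (Finset.subset_univ s.toFinset) fun w _ hw =>
      extendByZero_apply_of_notMem x (fun h => hw (Set.mem_toFinset.2 h)),
    Finset.sum_subtype s.toFinset (fun _ => Set.mem_toFinset)]
  exact Finset.sum_congr rfl fun i _ => extendByZero_apply_coe x i

end ExtendByZero

theorem Set.eq_of_mem_inter_eq_singleton {α : Type*} {s t : Set α} {a x : α} (h : s ∩ t = {a})
    (hs : x ∈ s) (ht : x ∈ t) : x = a :=
  Set.mem_singleton_iff.1 (h ▸ Set.mem_inter hs ht)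

section Wedge

variable {V : Type} [Fintype V] {G : SimpleGraph V}

theorem extendByZero_zonotopePoint {s : Set V} [Fintype s] {c : V → V → ℝ}
    (hc : ∀ u w, c u w ≠ 0 → u ∈ s ∧ w ∈ s) :
    extendByZero s (zonotopePoint fun i j : s => c i j) = zonotopePoint c := by
  have hrow (u : V) : extendByZero s (fun j : s => c u j) = c u :=
    extendByZero_restrict fun w hw => by_contra fun h => hw (hc u w h).2
  rw [← extendByZero_restrict (f := zonotopePoint c) fun u hu =>
    Finset.sum_eq_zero fun w _ => by_contra fun h => hu (hc u w h).1]
  congr 1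
  funext i
  rw [zonotopePoint, zonotopePoint, ← sum_extendByZero, hrow]

theorem disjoint_map_ker_coordSum {s t : Set V} [Fintype s] [Fintype t] {v : V}
    (hst : s ∩ t = {v}) :
    Disjoint ((LinearMap.ker (coordSum s)).map (extendByZero s))
      ((LinearMap.ker (coordSum t)).map (extendByZero t)) := by
  rw [Submodule.disjoint_def]
  rintro _ ⟨a, ha, rfl⟩ ⟨b, -, hb⟩
  have hsupp (w : V) (hw : w ≠ v) : extendByZero s a w = 0 := by
    by_cases hws : w ∈ s
    · rw [← hb]
      exact extendByZero_apply_of_notMem b fun hwt =>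
        hw (Set.eq_of_mem_inter_eq_singleton hst hws hwt)
    · exact extendByZero_apply_of_notMem a hws
  have hv : extendByZero s a v = 0 := by
    rw [← Finset.sum_eq_single v (fun w _ hw => hsupp w hw)
      fun hv => absurd (Finset.mem_univ v) hv, sum_extendByZero,
      ← coordSum_apply]
    exact LinearMap.mem_ker.1 ha
  funext w
  by_cases hw : w = v
  · rw [hw, hv]
    rfl
  · exact hsupp w hw

variable [DecidableEq V]

theorem image_extendByZero_graphicalZonotope (s : Set V) [Fintype s] :
    extendByZero s '' graphicalZonotope (G.induce s)
      = zonotopePoint '' {c | IsZonotopeCoeff G c ∧ ∀ u w, c u w ≠ 0 → u ∈ s ∧ w ∈ s} := by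
  classical
  rw [graphicalZonotope_eq_image, Set.image_image]
  ext x
  constructor
  · rintro ⟨c', hc', rfl⟩
    let c : V → V → ℝ := fun u w => if h : u ∈ s ∧ w ∈ s then c' ⟨u, h.1⟩ ⟨w, h.2⟩ else 0
    have hsupp : ∀ u w, c u w ≠ 0 → u ∈ s ∧ w ∈ s :=
      fun u w h => by_contra fun h' => h (dif_neg h')
    have hrestrict : (fun i j : s => c i j) = c' := funext₂ fun i j => dif_pos ⟨i.2, j.2⟩
    refine ⟨c, ⟨(isZonotopeCoeff_induce_iff hsupp).1 (hrestrict ▸ hc'), hsupp⟩, ?_⟩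
    rw [← extendByZero_zonotopePoint hsupp, hrestrict]
  · rintro ⟨c, ⟨hc, hsupp⟩, rfl⟩
    exact ⟨_, (isZonotopeCoeff_induce_iff hsupp).2 hc, extendByZero_zonotopePoint hsupp⟩

theorem graphicalZonotope_eq_add {s t : Set V} [Fintype s] [Fintype t] {v : V}
    (hst : s ∩ t = {v}) (hE : ∀ u w, G.Adj u w → (u ∈ s ∧ w ∈ s) ∨ (u ∈ t ∧ w ∈ t)) :
    graphicalZonotope G = extendByZero s '' graphicalZonotope (G.induce s)
      + extendByZero t '' graphicalZonotope (G.induce t) := by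
  classical
  rw [image_extendByZero_graphicalZonotope, image_extendByZero_graphicalZonotope,
    graphicalZonotope_eq_image]
  ext x
  constructor
  · rintro ⟨c, hc, rfl⟩
    let p : V → V → Prop := fun u w => u ∈ s ∧ w ∈ s
    have hp (u w : V) : p u w ↔ p w u := and_comm
    refine ⟨_, ⟨_, ⟨hc.ite p hp, fun u w h => by_contra fun h' => h (if_neg h')⟩, rfl⟩,
      _, ⟨_, ⟨hc.ite (fun u w => ¬p u w) fun u w => not_congr (hp u w), fun u w h => ?_⟩, rfl⟩,
      ?_⟩
    · have hpuw : ¬p u w := by_contra fun h' => h (if_neg h')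
      have hadj : G.Adj u w := by_contra fun h' => h (by simp [hpuw, hc.eq_zero_of_not_adj u w h'])
      exact (hE u w hadj).resolve_left hpuw
    · show zonotopePoint _ + zonotopePoint _ = _
      rw [← zonotopePoint_add]
      congr 1
      funext u w
      by_cases h : p u w <;> simp [h]
  · rintro ⟨_, ⟨c₁, ⟨hc₁, hs₁⟩, rfl⟩, _, ⟨c₂, ⟨hc₂, hs₂⟩, rfl⟩, rfl⟩
    refine ⟨c₁ + c₂, hc₁.add hc₂ fun u w => ?_, zonotopePoint_add c₁ c₂⟩
    by_contra! h
    obtain ⟨⟨hu₁, hw₁⟩, hu₂, hw₂⟩ := And.intro (hs₁ u w h.1) (hs₂ u w h.2)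
    have hu : u = v := Set.eq_of_mem_inter_eq_singleton hst hu₁ hu₂
    have hw : w = v := Set.eq_of_mem_inter_eq_singleton hst hw₁ hw₂
    exact h.1 (hc₁.eq_zero_of_not_adj u w (hu ▸ hw ▸ G.irrefl))

theorem exists_bijective_exposedFace_wedge {s t : Set V} [Fintype s] [Fintype t] {v : V}
    (hst : s ∩ t = {v}) (hE : ∀ u w, G.Adj u w → (u ∈ s ∧ w ∈ s) ∨ (u ∈ t ∧ w ∈ t)) :
    ∃ Φ : ExposedFace (graphicalZonotope (G.induce s))
        × ExposedFace (graphicalZonotope (G.induce t)) → ExposedFace (graphicalZonotope G),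
      Bijective Φ ∧ ∀ p, (Φ p).dim = p.1.dim + p.2.dim := by
  have hK (r : Set V) [Fintype r] : extendByZero r '' graphicalZonotope (G.induce r)
      ⊆ (LinearMap.ker (coordSum r)).map (extendByZero r) :=
    Set.image_mono (graphicalZonotope_subset_ker_coordSum _)
  have hU := disjoint_map_ker_coordSum hst
  rw [graphicalZonotope_eq_add hst hE]
  refine ⟨ExposedFace.add hU (hK s) (hK t) ∘ Prod.map (ExposedFace.image
    (extendByZero_injective s)) (ExposedFace.image (extendByZero_injective t)),
    (ExposedFace.bijective_add hU (hK s) (hK t)).comp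
      ((ExposedFace.bijective_image _ _).prodMap (ExposedFace.bijective_image _ _)), fun p => ?_⟩
  rw [comp_apply, ExposedFace.dim_add, Prod.map_fst, Prod.map_snd, ExposedFace.dim_image,
    ExposedFace.dim_image]

end Wedge

theorem fPolynomial_graphicalZonotope_wedge_general
    {V : Type} [Fintype V] [DecidableEq V] (G : SimpleGraph V) (v : V)
    (A B : Finset V) (hI : A ∩ B = {v})
    (hE : ∀ u w, G.Adj u w → (u ∈ A ∧ w ∈ A) ∨ (u ∈ B ∧ w ∈ B))
    (a b : ℕ) (ha : A.card = a) (hb : B.card = b) :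
    ∑ k ∈ Finset.range (a + b - 1), (faceCount G k : Polynomial ℤ) * X ^ k
      = (∑ k ∈ Finset.range a,
            (faceCount (G.induce (A : Set V)) k : Polynomial ℤ) * X ^ k) *
        (∑ k ∈ Finset.range b,
            (faceCount (G.induce (B : Set V)) k : Polynomial ℤ) * X ^ k) := by
  have hAB : (A : Set V) ∩ B = {v} := by exact_mod_cast hI
  have hv : v ∈ A ∩ B := hI ▸ Finset.mem_singleton_self v
  have : Nonempty (A : Set V) := ⟨⟨v, (Finset.mem_inter.1 hv).1⟩⟩
  have : Nonempty (B : Set V) := ⟨⟨v, (Finset.mem_inter.1 hv).2⟩⟩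
  obtain ⟨Φ, hΦ, hdim⟩ := exists_bijective_exposedFace_wedge hAB hE
  simp only [faceCount_eq_card]
  refine sum_range_card_fiber_mul_X_pow_of_bijective hΦ hdim (fun C => ?_) (fun C => ?_)
  · simpa [ha] using C.dim_lt_card
  · simpa [hb] using C.dim_lt_card

/-- The `f`-polynomial of the graphical zonotope of a wedge of two graphs is the product of
the `f`-polynomials of the graphical zonotopes of the two pieces. -/
theorem fPolynomial_graphicalZonotope_wedge
    {V : Type} [Fintype V] [DecidableEq V] (G : SimpleGraph V) (v : V)
    (A B : Finset V) (hU : A ∪ B = Finset.univ) (hI : A ∩ B = {v})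
    (hE : ∀ u w, G.Adj u w → (u ∈ A ∧ w ∈ A) ∨ (u ∈ B ∧ w ∈ B))
    (a b : ℕ) (ha : A.card = a) (hb : B.card = b) (ha1 : 1 ≤ a) (hb1 : 1 ≤ b)
    (hA : (G.induce (A : Set V)).Connected) (hB : (G.induce (B : Set V)).Connected) :
    ∑ k ∈ Finset.range (a + b - 1), (faceCount G k : Polynomial ℤ) * X ^ k
      = (∑ k ∈ Finset.range a,
            (faceCount (G.induce (A : Set V)) k : Polynomial ℤ) * X ^ k) *
        (∑ k ∈ Finset.range b,
            (faceCount (G.induce (B : Set V)) k : Polynomial ℤ) * X ^ k) :=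
  fPolynomial_graphicalZonotope_wedge_general G v A B hI hE a b ha hb
end

section
/- Let n ≥ 1 and let K_n be the complete graph on n vertices. Then the f-polynomial of the permutohedron Z_{K_n} satisfies Σ_{k=0}^{n−1} f_k(Z_{K_n})·q^k = Σ over all permutations π of Fin n of (q+1)^{des(π)}, as an identity in ℤ[q], where des(π) is the number of indices i ∈ {0,…,n−2} with π(i) > π(i+1). -/
open Polynomial

/-- The number of descents of a permutation of `Fin n`: indices `i ∈ {0,…,n-2}`
with `π i > π (i+1)`. -/
def descentCount (n : ℕ) (π : Equiv.Perm (Fin n)) : ℕ :=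
  (Finset.univ.filter fun i : Fin n =>
      ∃ j : Fin n, (j : ℕ) = (i : ℕ) + 1 ∧ π j < π i).card

open Finset in
lemma _zg_open_marker : True := trivial

namespace ZG

open Finset

variable {n : ℕ}

def IsDecomp (x : Fin n → ℝ) (c : Fin n → Fin n → ℝ) : Prop :=
  (∀ u v, c u v = - c v u) ∧ (∀ u v, |c u v| ≤ 1) ∧ x = fun w => ∑ u, c w u

lemma mem_Z_iff {x : Fin n → ℝ} :
    x ∈ graphicalZonotope (⊤ : SimpleGraph (Fin n)) ↔ ∃ c, IsDecomp x c := by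
  constructor
  · rintro ⟨c, ha, -, hb, hx⟩; exact ⟨c, ha, hb, hx⟩
  · rintro ⟨c, ha, hb, hx⟩
    refine ⟨c, ha, ?_, hb, hx⟩
    intro u v h
    have huv : u = v := by simpa using h
    subst huv
    have := ha u u; linarith

/-- The linear functional given by `ℓ`. -/
def L (ℓ x : Fin n → ℝ) : ℝ := ∑ w, ℓ w * x w

/-- Twice the max of `L ℓ` over the zonotope. -/
def M (ℓ : Fin n → ℝ) : ℝ := ∑ p : Fin n × Fin n, |ℓ p.1 - ℓ p.2|

lemma two_L {x : Fin n → ℝ} {c} (hd : IsDecomp x c) (ℓ : Fin n → ℝ) :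
    2 * L ℓ x = ∑ p : Fin n × Fin n, c p.1 p.2 * (ℓ p.1 - ℓ p.2) := by
  have h1 : ∑ p : Fin n × Fin n, c p.1 p.2 * ℓ p.1 = L ℓ x := by
    rw [Fintype.sum_prod_type, L, hd.2.2]
    simp [Finset.mul_sum, mul_comm]
  have h2 : ∑ p : Fin n × Fin n, c p.1 p.2 * ℓ p.2
      = - ∑ p : Fin n × Fin n, c p.1 p.2 * ℓ p.1 := by
    have e1 : ∑ p : Fin n × Fin n, c p.1 p.2 * ℓ p.2
        = ∑ p : Fin n × Fin n, c p.2 p.1 * ℓ p.1 :=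
      Fintype.sum_equiv (Equiv.prodComm (Fin n) (Fin n)) _ _ (fun p => rfl)
    rw [e1, ← Finset.sum_neg_distrib]
    apply Finset.sum_congr rfl
    rintro ⟨u, v⟩ -
    simp only
    rw [hd.1 v u]; ring
  have : ∑ p : Fin n × Fin n, c p.1 p.2 * (ℓ p.1 - ℓ p.2)
      = ∑ p : Fin n × Fin n, c p.1 p.2 * ℓ p.1 - ∑ p : Fin n × Fin n, c p.1 p.2 * ℓ p.2 := by
    rw [← Finset.sum_sub_distrib]; apply Finset.sum_congr rfl; intros; ring
  rw [this, h2, h1]; ring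

lemma term_le {x : Fin n → ℝ} {c} (hd : IsDecomp x c) (ℓ : Fin n → ℝ) (u v : Fin n) :
    c u v * (ℓ u - ℓ v) ≤ |ℓ u - ℓ v| := by
  calc c u v * (ℓ u - ℓ v) ≤ |c u v * (ℓ u - ℓ v)| := le_abs_self _
    _ = |c u v| * |ℓ u - ℓ v| := abs_mul _ _
    _ ≤ 1 * |ℓ u - ℓ v| := by
        apply mul_le_mul_of_nonneg_right (hd.2.1 u v) (abs_nonneg _)
    _ = |ℓ u - ℓ v| := one_mul _

lemma two_L_le {x : Fin n → ℝ} (hx : ∃ c, IsDecomp x c) (ℓ : Fin n → ℝ) :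
    2 * L ℓ x ≤ M ℓ := by
  obtain ⟨c, hd⟩ := hx
  rw [two_L hd ℓ]
  exact Finset.sum_le_sum fun p _ => term_le hd ℓ p.1 p.2

/-- The canonical sign coefficients for `ℓ`. -/
noncomputable def csgn (ℓ : Fin n → ℝ) (u v : Fin n) : ℝ :=
  if ℓ v < ℓ u then 1 else if ℓ u < ℓ v then -1 else 0

lemma csgn_decomp (ℓ : Fin n → ℝ) :
    IsDecomp (fun w => ∑ u, csgn ℓ w u) (csgn ℓ) := by
  refine ⟨?_, ?_, rfl⟩
  · intro u v
    unfold csgn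
    rcases lt_trichotomy (ℓ u) (ℓ v) with h | h | h
    · simp [h, not_lt.2 h.le, lt_asymm h]
    · simp [h, lt_irrefl]
    · simp [h, not_lt.2 h.le, lt_asymm h]
  · intro u v
    unfold csgn
    split_ifs <;> simp

lemma csgn_mul (ℓ : Fin n → ℝ) (u v : Fin n) :
    csgn ℓ u v * (ℓ u - ℓ v) = |ℓ u - ℓ v| := by
  unfold csgn
  rcases lt_trichotomy (ℓ u) (ℓ v) with h | h | h
  · rw [if_neg (lt_asymm h), if_pos h, abs_of_neg (by linarith)]; ring
  · rw [h]; simp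
  · rw [if_pos h, abs_of_pos (by linarith)]; ring

/-- The (candidate) face of the zonotope in direction `ℓ`. -/
def FaceOf (ℓ : Fin n → ℝ) : Set (Fin n → ℝ) :=
  {x | x ∈ graphicalZonotope (⊤ : SimpleGraph (Fin n)) ∧
    ∀ y ∈ graphicalZonotope (⊤ : SimpleGraph (Fin n)), L ℓ y ≤ L ℓ x}

def Forced (ℓ : Fin n → ℝ) (c : Fin n → Fin n → ℝ) : Prop :=
  ∀ u v, ℓ u < ℓ v → c u v = -1

lemma two_L_of_forced {x : Fin n → ℝ} {c} (hd : IsDecomp x c) {ℓ : Fin n → ℝ}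
    (hf : Forced ℓ c) : 2 * L ℓ x = M ℓ := by
  rw [two_L hd ℓ]
  apply Finset.sum_congr rfl
  rintro ⟨u, v⟩ -
  simp only
  rcases lt_trichotomy (ℓ u) (ℓ v) with h | h | h
  · rw [hf u v h, abs_of_neg (by linarith)]; ring
  · rw [h]; simp
  · rw [hd.1 u v, hf v u h, abs_of_pos (by linarith)]; ring

lemma csgn_forced (ℓ : Fin n → ℝ) : Forced ℓ (csgn ℓ) := by
  intro u v h
  unfold csgn
  rw [if_neg (lt_asymm h), if_pos h]

lemma forced_of_mem {x : Fin n → ℝ} {ℓ : Fin n → ℝ} (hx : x ∈ FaceOf ℓ)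
    {c} (hd : IsDecomp x c) : Forced ℓ c := by
  have hcs := csgn_decomp ℓ
  have hmax : 2 * L ℓ x = M ℓ := by
    have h1 : 2 * L ℓ x ≤ M ℓ := two_L_le ⟨c, hd⟩ ℓ
    have h2 : L ℓ (fun w => ∑ u, csgn ℓ w u) ≤ L ℓ x :=
      hx.2 _ (mem_Z_iff.2 ⟨csgn ℓ, hcs⟩)
    have h3 : 2 * L ℓ (fun w => ∑ u, csgn ℓ w u) = M ℓ :=
      two_L_of_forced hcs (csgn_forced ℓ)
    linarith
  rw [two_L hd ℓ] at hmax
  have heach : ∀ p ∈ (univ : Finset (Fin n × Fin n)),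
      c p.1 p.2 * (ℓ p.1 - ℓ p.2) = |ℓ p.1 - ℓ p.2| :=
    (Finset.sum_eq_sum_iff_of_le (fun p _ => term_le hd ℓ p.1 p.2)).1 hmax
  intro u v huv
  have := heach (u, v) (Finset.mem_univ _)
  simp only at this
  rw [abs_of_neg (by linarith)] at this
  have hne : ℓ u - ℓ v ≠ 0 := by linarith
  have : (c u v) * (ℓ u - ℓ v) = (-1) * (ℓ u - ℓ v) := by linarith
  exact mul_right_cancel₀ hne this

lemma mem_faceOf_iff {x : Fin n → ℝ} {ℓ : Fin n → ℝ} :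
    x ∈ FaceOf ℓ ↔ ∃ c, IsDecomp x c ∧ Forced ℓ c := by
  constructor
  · intro hx
    obtain ⟨c, hd⟩ := mem_Z_iff.1 hx.1
    exact ⟨c, hd, forced_of_mem hx hd⟩
  · rintro ⟨c, hd, hf⟩
    refine ⟨mem_Z_iff.2 ⟨c, hd⟩, fun y hy => ?_⟩
    have h1 : 2 * L ℓ y ≤ M ℓ := two_L_le (mem_Z_iff.1 hy) ℓ
    have h2 : 2 * L ℓ x = M ℓ := two_L_of_forced hd hf
    linarith

lemma faceOf_congr {ℓ ℓ' : Fin n → ℝ} (h : ∀ u v, ℓ u < ℓ v ↔ ℓ' u < ℓ' v) :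
    FaceOf ℓ = FaceOf ℓ' := by
  ext x
  rw [mem_faceOf_iff, mem_faceOf_iff]
  constructor <;> rintro ⟨c, hd, hf⟩ <;> exact ⟨c, hd, fun u v huv => hf u v (by
    first
    | exact (h u v).2 huv
    | exact (h u v).1 huv)⟩

noncomputable def x0 (ℓ : Fin n → ℝ) : Fin n → ℝ := fun w => ∑ u, csgn ℓ w u

lemma x0_mem (ℓ : Fin n → ℝ) : x0 ℓ ∈ FaceOf ℓ :=
  mem_faceOf_iff.2 ⟨csgn ℓ, csgn_decomp ℓ, csgn_forced ℓ⟩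

lemma isExposed_faceOf (ℓ : Fin n → ℝ) :
    IsExposed ℝ (graphicalZonotope (⊤ : SimpleGraph (Fin n))) (FaceOf ℓ) := by
  intro _
  refine ⟨LinearMap.toContinuousLinearMap (∑ w, ℓ w • LinearMap.proj w), ?_⟩
  have hl : ∀ y : Fin n → ℝ,
      (LinearMap.toContinuousLinearMap (∑ w, ℓ w • (LinearMap.proj w : (Fin n → ℝ) →ₗ[ℝ] ℝ))) y
        = L ℓ y := by
    intro y
    rw [LinearMap.coe_toContinuousLinearMap']
    simp [L, LinearMap.sum_apply, LinearMap.smul_apply, LinearMap.proj_apply, smul_eq_mul]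
  ext x
  simp only [FaceOf, Set.mem_setOf_eq, Set.mem_sep_iff, hl]

/-- Every nonempty exposed face is of the form `FaceOf ℓ`. -/
lemma exists_faceOf {F : Set (Fin n → ℝ)} (hne : F.Nonempty)
    (hexp : IsExposed ℝ (graphicalZonotope (⊤ : SimpleGraph (Fin n))) F) :
    ∃ ℓ : Fin n → ℝ, F = FaceOf ℓ := by
  obtain ⟨l, hl⟩ := hexp hne
  refine ⟨fun w => l (fun j => if w = j then 1 else 0), ?_⟩
  have key : ∀ y : Fin n → ℝ, l y = L (fun w => l (fun j => if w = j then 1 else 0)) y := by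
    intro y
    conv_lhs => rw [pi_eq_sum_univ y]
    rw [map_sum, L]
    apply Finset.sum_congr rfl
    intro w _
    rw [map_smul, smul_eq_mul, mul_comm]
  rw [hl]
  ext x
  simp only [FaceOf, Set.mem_setOf_eq]
  constructor
  · rintro ⟨hxA, hmax⟩
    refine ⟨hxA, fun y hy => ?_⟩
    rw [← key, ← key]
    exact hmax y hy
  · rintro ⟨hxA, hmax⟩
    refine ⟨hxA, fun y hy => ?_⟩
    rw [key, key]
    exact hmax y hy

section Dim

open Function

variable {m : ℕ}

/-- The functional attached to a map to `Fin m`. -/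
def lf (f : Fin n → Fin m) : Fin n → ℝ := fun w => ((f w : ℕ) : ℝ)

lemma lf_lt_iff {f : Fin n → Fin m} {u v : Fin n} : lf f u < lf f v ↔ f u < f v := by
  unfold lf
  rw [Nat.cast_lt]
  exact Iff.rfl

lemma lf_eq_iff {f : Fin n → Fin m} {u v : Fin n} : lf f u = lf f v ↔ f u = f v := by
  constructor
  · intro h
    exact Fin.ext (Nat.cast_injective h)
  · intro h
    unfold lf; rw [h]

/-- The fiber-summing linear map. -/
noncomputable def T (f : Fin n → Fin m) : (Fin n → ℝ) →ₗ[ℝ] (Fin m → ℝ) :=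
  LinearMap.pi fun b => ∑ w ∈ univ.filter (fun w => f w = b), LinearMap.proj w

lemma T_apply (f : Fin n → Fin m) (x : Fin n → ℝ) (b : Fin m) :
    T f x b = ∑ w ∈ univ.filter (fun w => f w = b), x w := by
  simp [T, LinearMap.pi_apply, LinearMap.sum_apply, LinearMap.proj_apply]

lemma antisym_sum_zero {c : Fin n → Fin n → ℝ} (ha : ∀ u v, c u v = - c v u)
    (s : Finset (Fin n)) : ∑ w ∈ s, ∑ u ∈ s, c w u = 0 := by
  have key : ∑ w ∈ s, ∑ u ∈ s, c w u = - ∑ w ∈ s, ∑ u ∈ s, c w u := by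
    nth_rewrite 2 [Finset.sum_comm]
    rw [← Finset.sum_neg_distrib]
    apply Finset.sum_congr rfl; intro w _
    rw [← Finset.sum_neg_distrib]
    apply Finset.sum_congr rfl; intro u _
    exact ha w u
  linarith

lemma csgn_of_lt {ℓ : Fin n → ℝ} {u v : Fin n} (h : ℓ u < ℓ v) : csgn ℓ u v = -1 := by
  unfold csgn; rw [if_neg (lt_asymm h), if_pos h]

lemma csgn_of_gt {ℓ : Fin n → ℝ} {u v : Fin n} (h : ℓ v < ℓ u) : csgn ℓ u v = 1 := by
  unfold csgn; rw [if_pos h]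

lemma csgn_of_eq {ℓ : Fin n → ℝ} {u v : Fin n} (h : ℓ u = ℓ v) : csgn ℓ u v = 0 := by
  unfold csgn; rw [if_neg (by rw [h]; exact lt_irrefl _), if_neg (by rw [h]; exact lt_irrefl _)]

lemma forced_eq_csgn {ℓ : Fin n → ℝ} {c : Fin n → Fin n → ℝ}
    (ha : ∀ u v, c u v = - c v u) (hfo : Forced ℓ c) {u v : Fin n} (hne : ℓ u ≠ ℓ v) :
    c u v = csgn ℓ u v := by
  rcases lt_or_gt_of_ne hne with h | h
  · rw [hfo u v h, csgn_of_lt h]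
  · rw [csgn_of_gt h, ha u v, hfo v u h]; ring

lemma block_sum {f : Fin n → Fin m} {x : Fin n → ℝ} {c : Fin n → Fin n → ℝ}
    (hd : IsDecomp x c) (hfo : Forced (lf f) c) (b : Fin m) :
    ∑ w ∈ univ.filter (fun w => f w = b), x w
      = ∑ w ∈ univ.filter (fun w => f w = b),
          ∑ u ∈ univ.filter (fun u => ¬ f u = b), csgn (lf f) w u := by
  have hx : ∀ w, x w = ∑ u, c w u := by intro w; rw [hd.2.2]
  calc ∑ w ∈ univ.filter (fun w => f w = b), x w
      = ∑ w ∈ univ.filter (fun w => f w = b),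
          ((∑ u ∈ univ.filter (fun u => f u = b), c w u)
            + ∑ u ∈ univ.filter (fun u => ¬ f u = b), c w u) := by
        apply Finset.sum_congr rfl; intro w _
        rw [hx w, Finset.sum_filter_add_sum_filter_not]
    _ = (∑ w ∈ univ.filter (fun w => f w = b), ∑ u ∈ univ.filter (fun u => f u = b), c w u)
        + ∑ w ∈ univ.filter (fun w => f w = b),
            ∑ u ∈ univ.filter (fun u => ¬ f u = b), c w u := Finset.sum_add_distrib
    _ = ∑ w ∈ univ.filter (fun w => f w = b),
          ∑ u ∈ univ.filter (fun u => ¬ f u = b), c w u := by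
        rw [antisym_sum_zero hd.1, zero_add]
    _ = ∑ w ∈ univ.filter (fun w => f w = b),
          ∑ u ∈ univ.filter (fun u => ¬ f u = b), csgn (lf f) w u := by
        apply Finset.sum_congr rfl; intro w hw
        apply Finset.sum_congr rfl; intro u hu
        rw [Finset.mem_filter] at hw hu
        apply forced_eq_csgn hd.1 hfo
        rw [Ne, lf_eq_iff, hw.2]
        exact fun h => hu.2 h.symm

lemma vectorSpan_le_ker {f : Fin n → Fin m} :
    vectorSpan ℝ (FaceOf (lf f)) ≤ LinearMap.ker (T f) := by
  rw [vectorSpan_def]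
  rw [Submodule.span_le]
  rintro z hz
  rw [Set.mem_vsub] at hz
  obtain ⟨x, hx, y, hy, rfl⟩ := hz
  obtain ⟨c, hdc, hfc⟩ := mem_faceOf_iff.1 hx
  obtain ⟨d, hdd, hfd⟩ := mem_faceOf_iff.1 hy
  rw [SetLike.mem_coe, LinearMap.mem_ker]
  funext b
  have : x -ᵥ y = x - y := rfl
  rw [this, map_sub]
  have hxb := block_sum hdc hfc b
  have hyb := block_sum hdd hfd b
  simp only [Pi.sub_apply, Pi.zero_apply, T_apply]
  rw [hxb, hyb, sub_self]

/-- standard basis vector -/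
def sbv (w : Fin n) : Fin n → ℝ := Pi.single w 1

lemma sbv_apply (w j : Fin n) : sbv w j = if j = w then 1 else 0 := by
  rw [sbv, Pi.single_apply]

lemma single_sub_mem {f : Fin n → Fin m} {u v : Fin n} (huv : f u = f v) :
    sbv u - sbv v ∈ vectorSpan ℝ (FaceOf (lf f)) := by
  rcases eq_or_ne u v with rfl | hne
  · rw [sub_self]; exact Submodule.zero_mem _
  · set δ : Fin n → Fin n → ℝ := fun p q =>
      if p = u ∧ q = v then 1 else if p = v ∧ q = u then -1 else 0 with hδdef
    have hδ : ∀ p q, δ p q = if p = u ∧ q = v then 1 else if p = v ∧ q = u then -1 else 0 :=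
      fun p q => rfl
    have hδas : ∀ p q, δ p q = - δ q p := by
      intro p q
      rw [hδ, hδ]
      by_cases h1 : p = u ∧ q = v
      · rw [if_pos h1, if_neg (fun h => hne (h.1.symm.trans h1.2)), if_pos ⟨h1.2, h1.1⟩]
        try norm_num
      · by_cases h2 : p = v ∧ q = u
        · rw [if_neg h1, if_pos h2, if_pos ⟨h2.2, h2.1⟩]
          try norm_num
        · rw [if_neg h1, if_neg h2, if_neg (fun h => h2 ⟨h.2, h.1⟩),
            if_neg (fun h => h1 ⟨h.2, h.1⟩)]
          try norm_num
    have hcsgn_uv : csgn (lf f) u v = 0 := csgn_of_eq (lf_eq_iff.2 huv)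
    have hcsgn_vu : csgn (lf f) v u = 0 := csgn_of_eq (lf_eq_iff.2 huv.symm)
    have hc1 : IsDecomp (fun w => ∑ b, (csgn (lf f) w b + δ w b))
        (fun p q => csgn (lf f) p q + δ p q) := by
      refine ⟨?_, ?_, rfl⟩
      · intro p q
        show csgn (lf f) p q + δ p q = -(csgn (lf f) q p + δ q p)
        rw [(csgn_decomp (lf f)).1 p q, hδas p q]; ring
      · intro p q
        show |csgn (lf f) p q + δ p q| ≤ 1
        rw [hδ]
        by_cases h1 : p = u ∧ q = v
        · rw [if_pos h1, h1.1, h1.2, hcsgn_uv]; norm_num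
        · by_cases h2 : p = v ∧ q = u
          · rw [if_neg h1, if_pos h2, h2.1, h2.2, hcsgn_vu]; norm_num
          · rw [if_neg h1, if_neg h2, add_zero]
            exact (csgn_decomp (lf f)).2.1 p q
    have hfo1 : Forced (lf f) (fun p q => csgn (lf f) p q + δ p q) := by
      intro p q hpq
      show csgn (lf f) p q + δ p q = -1
      have hδ0 : δ p q = 0 := by
        rw [hδ, if_neg, if_neg]
        · rintro ⟨rfl, rfl⟩
          exact (ne_of_lt hpq) (lf_eq_iff.2 huv.symm)
        · rintro ⟨rfl, rfl⟩
          exact (ne_of_lt hpq) (lf_eq_iff.2 huv)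
      rw [hδ0, add_zero]
      exact csgn_forced (lf f) p q hpq
    have hmem1 : (fun w => ∑ b, (csgn (lf f) w b + δ w b)) ∈ FaceOf (lf f) :=
      mem_faceOf_iff.2 ⟨_, hc1, hfo1⟩
    have hkey : (fun w => ∑ b, (csgn (lf f) w b + δ w b)) -ᵥ x0 (lf f)
        = sbv u - sbv v := by
      funext w
      show (∑ b, (csgn (lf f) w b + δ w b)) - (∑ b, csgn (lf f) w b) = sbv u w - sbv v w
      rw [Finset.sum_add_distrib, add_sub_cancel_left]
      have hsw : ∑ b, δ w b = sbv u w - sbv v w := by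
        by_cases hwu : w = u
        · rw [hwu, Finset.sum_eq_single v (fun b _ hb => by
              rw [hδ, if_neg (fun h => hb h.2), if_neg (fun h => hne h.1)])
              (fun h => absurd (Finset.mem_univ v) h),
            hδ, if_pos ⟨rfl, rfl⟩, sbv_apply, sbv_apply, if_pos rfl, if_neg hne]
          norm_num
        · by_cases hwv : w = v
          · rw [hwv, Finset.sum_eq_single u (fun b _ hb => by
                rw [hδ, if_neg (fun h => hne h.1.symm), if_neg (fun h => hb h.2)])
                (fun h => absurd (Finset.mem_univ u) h),
              hδ, if_neg (fun h => hne h.1.symm), if_pos ⟨rfl, rfl⟩,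
              sbv_apply, sbv_apply, if_neg hne.symm, if_pos rfl]
            norm_num
          · rw [Finset.sum_eq_zero (fun b _ => by
                rw [hδ, if_neg (fun h => hwu h.1), if_neg (fun h => hwv h.1)]),
              sbv_apply, sbv_apply, if_neg hwu, if_neg hwv]
            norm_num
      rw [hsw]
    rw [← hkey]
    exact vsub_mem_vectorSpan ℝ hmem1 (x0_mem (lf f))

lemma ker_le_vectorSpan {f : Fin n → Fin m} (hf : Surjective f) :
    LinearMap.ker (T f) ≤ vectorSpan ℝ (FaceOf (lf f)) := by
  intro x hx
  rw [LinearMap.mem_ker] at hx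
  set g := surjInv hf with hg
  have hfg : ∀ b, f (g b) = b := fun b => surjInv_eq hf b
  have hsum1 : ∑ w, x w • sbv w = x := by
    have h1 : ∀ w : Fin n, x w • sbv w = Pi.single w (x w) := by
      intro w
      rw [sbv, ← Pi.single_smul, smul_eq_mul, mul_one]
    rw [Finset.sum_congr rfl (fun w _ => h1 w), Finset.univ_sum_single]
  have hsum2 : ∑ w, x w • sbv (g (f w)) = 0 := by
    rw [← Finset.sum_fiberwise univ f (fun w => x w • sbv (g (f w)))]
    apply Finset.sum_eq_zero
    intro b _
    have h2 : ∀ w ∈ univ.filter (fun w => f w = b),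
        x w • sbv (g (f w)) = x w • sbv (g b) := by
      intro w hw
      rw [Finset.mem_filter] at hw
      rw [hw.2]
    rw [Finset.sum_congr rfl h2, ← Finset.sum_smul]
    have hb : ∑ w ∈ univ.filter (fun w => f w = b), x w = 0 := by
      have h3 := congrFun hx b
      rwa [T_apply] at h3
    rw [hb, zero_smul]
  have hxe : x = ∑ w, x w • (sbv w - sbv (g (f w))) := by
    rw [Finset.sum_congr rfl (fun w _ => smul_sub (x w) _ _), Finset.sum_sub_distrib,
      hsum1, hsum2, sub_zero]
  rw [hxe]
  apply Submodule.sum_mem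
  intro w _
  exact Submodule.smul_mem _ _ (single_sub_mem (by rw [hfg (f w)]))

lemma vectorSpan_faceOf {f : Fin n → Fin m} (hf : Surjective f) :
    vectorSpan ℝ (FaceOf (lf f)) = LinearMap.ker (T f) :=
  le_antisymm vectorSpan_le_ker (ker_le_vectorSpan hf)

lemma T_surjective {f : Fin n → Fin m} (hf : Surjective f) :
    Surjective (T f) := by
  set g := surjInv hf with hg
  have hfg : ∀ b, f (g b) = b := fun b => surjInv_eq hf b
  have hsingle : ∀ b : Fin m, T f (sbv (g b)) = Pi.single b 1 := by
    intro b
    funext b'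
    rw [T_apply]
    rw [Finset.sum_congr rfl (fun w _ => sbv_apply (g b) w), Finset.sum_ite_eq']
    rcases eq_or_ne b b' with rfl | hbb
    · have hmem : g b ∈ univ.filter (fun w => f w = b) :=
        Finset.mem_filter.2 ⟨Finset.mem_univ _, hfg b⟩
      rw [if_pos hmem, Pi.single_apply, if_pos rfl]
    · have hmem : g b ∉ univ.filter (fun w => f w = b') :=
        fun h => hbb ((hfg b).symm.trans (Finset.mem_filter.1 h).2)
      rw [if_neg hmem, Pi.single_apply, if_neg (fun h => hbb h.symm)]
  intro y
  refine ⟨∑ b, y b • sbv (g b), ?_⟩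
  rw [map_sum]
  have h4 : ∀ b : Fin m, T f (y b • sbv (g b)) = Pi.single b (y b) := by
    intro b
    rw [map_smul, hsingle b]
    funext j
    rw [Pi.smul_apply, Pi.single_apply, Pi.single_apply, smul_eq_mul]
    split_ifs <;> ring
  rw [Finset.sum_congr rfl (fun b _ => h4 b), Finset.univ_sum_single]

lemma finrank_ker_T {f : Fin n → Fin m} (hf : Surjective f) :
    Module.finrank ℝ (LinearMap.ker (T f)) = n - m := by
  have h1 := LinearMap.finrank_range_add_finrank_ker (T f)
  rw [LinearMap.range_eq_top.2 (T_surjective hf), finrank_top] at h1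
  have h2 : Module.finrank ℝ (Fin m → ℝ) = m := by
    rw [Module.finrank_fintype_fun_eq_card]; exact Fintype.card_fin m
  have h3 : Module.finrank ℝ (Fin n → ℝ) = n := by
    rw [Module.finrank_fintype_fun_eq_card]; exact Fintype.card_fin n
  omega

lemma dim_faceOf {f : Fin n → Fin m} (hf : Surjective f) :
    Module.finrank ℝ (affineSpan ℝ (FaceOf (lf f))).direction = n - m := by
  rw [direction_affineSpan, vectorSpan_faceOf hf, finrank_ker_T hf]

end Dim

section Inj

open Function

variable {m : ℕ}

lemma lt_of_faceOf_eq {ℓ ℓ' : Fin n → ℝ} (h : FaceOf ℓ = FaceOf ℓ')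
    {u v : Fin n} (huv : ℓ u < ℓ v) : ℓ' u < ℓ' v := by
  by_contra hno
  have hne : u ≠ v := fun he => absurd (congrArg ℓ he) (ne_of_lt huv)
  set c : Fin n → Fin n → ℝ := fun p q =>
    if p = u ∧ q = v then 1 else if p = v ∧ q = u then -1 else csgn ℓ' p q with hcdef
  have hc : ∀ p q, c p q = if p = u ∧ q = v then 1 else
      if p = v ∧ q = u then -1 else csgn ℓ' p q := fun p q => rfl
  have hdc : IsDecomp (fun w => ∑ b, c w b) c := by
    refine ⟨?_, ?_, rfl⟩
    · intro p q
      rw [hc, hc]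
      by_cases h1 : p = u ∧ q = v
      · rw [if_pos h1, if_neg (fun hx => hne (hx.1.symm.trans h1.2)), if_pos ⟨h1.2, h1.1⟩]
        try norm_num
      · by_cases h2 : p = v ∧ q = u
        · rw [if_neg h1, if_pos h2, if_pos ⟨h2.2, h2.1⟩]
          try norm_num
        · rw [if_neg h1, if_neg h2, if_neg (fun hx => h2 ⟨hx.2, hx.1⟩),
            if_neg (fun hx => h1 ⟨hx.2, hx.1⟩)]
          exact (csgn_decomp ℓ').1 p q
    · intro p q
      rw [hc]
      split_ifs
      · norm_num
      · norm_num
      · exact (csgn_decomp ℓ').2.1 p q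
  have hfo : Forced ℓ' c := by
    intro p q hpq
    have h1 : ¬(p = u ∧ q = v) := by
      rintro ⟨rfl, rfl⟩
      exact hno hpq
    by_cases h2 : p = v ∧ q = u
    · rw [hc, if_neg h1, if_pos h2]
    · rw [hc, if_neg h1, if_neg h2]
      exact csgn_forced ℓ' p q hpq
  have hmem : (fun w => ∑ b, c w b) ∈ FaceOf ℓ' := mem_faceOf_iff.2 ⟨c, hdc, hfo⟩
  rw [← h] at hmem
  have hfo2 : Forced ℓ c := forced_of_mem hmem hdc
  have h1 : c u v = -1 := hfo2 u v huv
  rw [hc, if_pos ⟨rfl, rfl⟩] at h1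
  norm_num at h1

lemma strictMono_fin_id {h : Fin m → Fin m} (hm : StrictMono h) : ∀ b, h b = b := by
  intro b
  have hwf : WellFoundedLT (Fin m) := inferInstance
  refine le_antisymm ?_ hm.le_apply
  have hm' : StrictMono (fun i : Fin m => (h i.rev).rev) := by
    intro i j hij
    have h1 : j.rev < i.rev := by rwa [Fin.rev_lt_rev]
    have h2 := hm h1
    show (h i.rev).rev < (h j.rev).rev
    rwa [Fin.rev_lt_rev]
  have h3 : b.rev ≤ (h b.rev.rev).rev := hm'.le_apply
  rw [Fin.rev_rev] at h3
  rwa [Fin.rev_le_rev] at h3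

lemma faceOf_inj {f f' : Fin n → Fin m} (hf : Surjective f) (hf' : Surjective f')
    (h : FaceOf (lf f) = FaceOf (lf f')) : f = f' := by
  have hpat : ∀ u v, f u < f v → f' u < f' v := by
    intro u v huv
    exact lf_lt_iff.1 (lt_of_faceOf_eq h (lf_lt_iff.2 huv))
  have hpat' : ∀ u v, f' u < f' v → f u < f v := by
    intro u v huv
    exact lf_lt_iff.1 (lt_of_faceOf_eq h.symm (lf_lt_iff.2 huv))
  have heq : ∀ u v, f u = f v → f' u = f' v := by
    intro u v huv
    rcases lt_trichotomy (f' u) (f' v) with hx | hx | hx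
    · exact absurd (hpat' u v hx) (by rw [huv]; exact lt_irrefl _)
    · exact hx
    · exact absurd (hpat' v u hx) (by rw [huv]; exact lt_irrefl _)
  set g := surjInv hf with hg
  have hfg : ∀ b, f (g b) = b := fun b => surjInv_eq hf b
  have hmono : StrictMono (fun b => f' (g b)) := by
    intro b b' hbb
    apply hpat
    rw [hfg, hfg]
    exact hbb
  have hid : ∀ b, f' (g b) = b := strictMono_fin_id hmono
  funext w
  have h1 : f w = f (g (f w)) := (hfg (f w)).symm
  rw [heq w (g (f w)) h1, hid]

/-- classification of nonempty exposed faces -/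
lemma exists_surj_of_face {F : Set (Fin n → ℝ)} (hne : F.Nonempty)
    (hexp : IsExposed ℝ (graphicalZonotope (⊤ : SimpleGraph (Fin n))) F) :
    ∃ (m : ℕ) (f : Fin n → Fin m), m ≤ n ∧ Surjective f ∧ F = FaceOf (lf f) := by
  obtain ⟨ℓ, rfl⟩ := exists_faceOf hne hexp
  set t : Finset ℝ := Finset.image ℓ univ with ht
  have hmem : ∀ w, ℓ w ∈ t := fun w => Finset.mem_image.2 ⟨w, Finset.mem_univ w, rfl⟩
  set e := t.orderIsoOfFin rfl with he
  refine ⟨t.card, fun w => e.symm ⟨ℓ w, hmem w⟩, ?_, ?_, ?_⟩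
  · calc t.card ≤ (univ : Finset (Fin n)).card := Finset.card_image_le
      _ = n := by rw [Finset.card_univ, Fintype.card_fin]
  · intro b
    obtain ⟨w, -, hw⟩ := Finset.mem_image.1 (e b).2
    refine ⟨w, ?_⟩
    show e.symm ⟨ℓ w, hmem w⟩ = b
    rw [show (⟨ℓ w, hmem w⟩ : {x // x ∈ t}) = e b from Subtype.ext hw,
      OrderIso.symm_apply_apply]
  · apply faceOf_congr
    intro u v
    rw [lf_lt_iff]
    constructor
    · intro huv
      have : (⟨ℓ u, hmem u⟩ : {x // x ∈ t}) < ⟨ℓ v, hmem v⟩ := huv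
      exact e.symm.lt_iff_lt.2 this
    · intro huv
      exact Subtype.mk_lt_mk.1 (e.symm.lt_iff_lt.1 huv)

end Inj

section Count

open Function

lemma faceCount_subtype_eq {k : ℕ} (hk : k < n) :
    Nat.card { F : Set (Fin n → ℝ) // F.Nonempty ∧
        IsExposed ℝ (graphicalZonotope (⊤ : SimpleGraph (Fin n))) F ∧
        Module.finrank ℝ (affineSpan ℝ F).direction = k }
      = Nat.card { f : Fin n → Fin (n - k) // Surjective f } := by
  symm
  apply Nat.card_eq_of_bijective (fun fp => ⟨FaceOf (lf fp.1), ⟨x0 _, x0_mem _⟩,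
    isExposed_faceOf _, by rw [dim_faceOf fp.2]; omega⟩)
  constructor
  · rintro ⟨f, hf⟩ ⟨f', hf'⟩ hff
    have h0 := congrArg Subtype.val hff
    simp only at h0
    exact Subtype.ext (faceOf_inj hf hf' h0)
  · rintro ⟨F, hne, hexp, hdim⟩
    obtain ⟨m, f, hmn, hf, hF⟩ := exists_surj_of_face hne hexp
    have hd : n - m = k := by
      rw [hF, dim_faceOf hf] at hdim
      exact hdim
    have hm : m = n - k := by omega
    subst hm
    refine ⟨⟨f, hf⟩, ?_⟩
    apply Subtype.ext
    exact hF.symm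

end Count

end ZG


namespace ZC

open Finset

variable {n : ℕ}

def Des (π : Equiv.Perm (Fin n)) : Finset (Fin n) :=
  univ.filter fun i => ∃ j : Fin n, (j : ℕ) = (i : ℕ) + 1 ∧ π j < π i

def beta (S : Finset (Fin n)) (i : Fin n) : ℕ :=
  (univ.filter fun j => j < i ∧ j ∉ S).card

lemma beta_zero (S : Finset (Fin n)) (i : Fin n) (hi : (i : ℕ) = 0) : beta S i = 0 := by
  rw [beta, Finset.card_eq_zero]
  apply Finset.filter_eq_empty_iff.2
  intro j _
  rintro ⟨h1, -⟩
  have := Fin.lt_def.1 h1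
  omega

lemma beta_succ (S : Finset (Fin n)) {i j : Fin n} (hj : (j : ℕ) = (i : ℕ) + 1) :
    beta S j = beta S i + (if i ∈ S then 0 else 1) := by
  by_cases hiS : i ∈ S
  · rw [if_pos hiS, add_zero, beta, beta]
    congr 1
    ext r
    simp only [Finset.mem_filter, Finset.mem_univ, true_and]
    constructor
    · rintro ⟨h1, h2⟩
      refine ⟨?_, h2⟩
      rcases Nat.lt_or_ge (r : ℕ) (i : ℕ) with h | h
      · exact Fin.lt_def.2 h
      · have hv : (r : ℕ) = (i : ℕ) := by have := Fin.lt_def.1 h1; omega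
        have hri : r = i := Fin.ext hv
        rw [hri] at h2
        exact absurd hiS h2
    · rintro ⟨h1, h2⟩
      exact ⟨Fin.lt_def.2 (by have := Fin.lt_def.1 h1; omega), h2⟩
  · rw [if_neg hiS, beta, beta]
    have hset : (univ.filter fun r => r < j ∧ r ∉ S)
        = insert i (univ.filter fun r => r < i ∧ r ∉ S) := by
      ext r
      simp only [Finset.mem_insert, Finset.mem_filter, Finset.mem_univ, true_and]
      constructor
      · rintro ⟨h1, h2⟩
        rcases Nat.lt_or_ge (r : ℕ) (i : ℕ) with h | h
        · exact Or.inr ⟨Fin.lt_def.2 h, h2⟩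
        · exact Or.inl (Fin.ext (by have := Fin.lt_def.1 h1; omega))
      · rintro (rfl | ⟨h1, h2⟩)
        · exact ⟨Fin.lt_def.2 (by omega), hiS⟩
        · exact ⟨Fin.lt_def.2 (by have := Fin.lt_def.1 h1; omega), h2⟩
    rw [hset, Finset.card_insert_of_notMem]
    intro hmem
    rw [Finset.mem_filter] at hmem
    exact absurd hmem.2.1 (lt_irrefl i)

lemma beta_mono (S : Finset (Fin n)) {i i' : Fin n} (h : i ≤ i') : beta S i ≤ beta S i' :=
  Finset.card_le_card (Finset.monotone_filter_right _
    (fun r _ hr => ⟨hr.1.trans_le h, hr.2⟩))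

def Dset (n : ℕ) : Finset (Fin n) := univ.filter fun j => (j : ℕ) < n - 1

lemma card_Dset (hn : 0 < n) : (Dset n).card = n - 1 := by
  have hd : Dset n = univ \ {(⟨n - 1, by omega⟩ : Fin n)} := by
    ext j
    simp only [Dset, Finset.mem_filter, Finset.mem_univ, true_and, Finset.mem_sdiff,
      Finset.mem_singleton]
    constructor
    · intro h he
      rw [he] at h
      simp only [Fin.val_mk] at h
      omega
    · intro h
      have hlt := j.isLt
      by_contra h2
      exact h (Fin.ext (by simp only [Fin.val_mk]; omega))
  rw [hd, Finset.card_sdiff_of_subset (by simp), Finset.card_univ, Fintype.card_fin,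
    Finset.card_singleton]

lemma Des_subset_Dset (π : Equiv.Perm (Fin n)) : Des π ⊆ Dset n := by
  intro i hi
  rw [Des, Finset.mem_filter] at hi
  obtain ⟨-, j, hj, -⟩ := hi
  rw [Dset, Finset.mem_filter]
  exact ⟨Finset.mem_univ _, by have := j.isLt; omega⟩

lemma beta_last (S : Finset (Fin n)) (hn : 0 < n) (hS : S ⊆ Dset n) (i : Fin n)
    (hi : (i : ℕ) = n - 1) : beta S i = (n - 1) - S.card := by
  have hset : (univ.filter fun j => j < i ∧ j ∉ S) = Dset n \ S := by
    ext j
    simp only [Finset.mem_filter, Finset.mem_univ, true_and, Finset.mem_sdiff, Dset,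
      Fin.lt_def, hi]
  rw [beta, hset, Finset.card_sdiff_of_subset hS, card_Dset hn]

lemma beta_le (S : Finset (Fin n)) (hn : 0 < n) (hS : S ⊆ Dset n) (i : Fin n) :
    beta S i ≤ (n - 1) - S.card := by
  calc beta S i ≤ beta S ⟨n - 1, by omega⟩ := by
        apply beta_mono
        rw [Fin.le_def]
        have := i.isLt
        simp
        omega
    _ = _ := beta_last S hn hS _ rfl

lemma beta_reach (S : Finset (Fin n)) :
    ∀ t, ∀ ht : t < n, ∀ b, b ≤ beta S ⟨t, ht⟩ → ∃ i' : Fin n, beta S i' = b := by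
  intro t
  induction t with
  | zero =>
    intro ht b hb
    have h0 : beta S ⟨0, ht⟩ = 0 := beta_zero S _ rfl
    exact ⟨⟨0, ht⟩, by omega⟩
  | succ t ih =>
    intro ht b hb
    have ht' : t < n := by omega
    have hstep := beta_succ S (i := ⟨t, ht'⟩) (j := ⟨t + 1, ht⟩) rfl
    by_cases hbs : b ≤ beta S ⟨t, ht'⟩
    · exact ih ht' b hbs
    · refine ⟨⟨t + 1, ht⟩, ?_⟩
      split_ifs at hstep <;> omega

lemma desc_chain {π : Equiv.Perm (Fin n)} {S : Finset (Fin n)} (hS : S ⊆ Des π) :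
    ∀ t, ∀ i j : Fin n, (j : ℕ) = t → i < j → beta S i = beta S j → π j < π i := by
  intro t
  induction t with
  | zero =>
    intro i j hj hij _
    have := Fin.lt_def.1 hij
    omega
  | succ t ih =>
    intro i j hj hij hbeq
    have htn : t < n := by have := j.isLt; omega
    set jp : Fin n := ⟨t, htn⟩ with hjp
    have hstep := beta_succ S (i := jp) (j := j) (by show (j : ℕ) = t + 1; omega)
    have hile : i ≤ jp := by
      rw [Fin.le_def]
      have := Fin.lt_def.1 hij
      simp [hjp]
      omega
    have h2 : beta S i ≤ beta S jp := beta_mono S hile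
    have h3 : beta S jp ≤ beta S j := beta_mono S (by rw [Fin.le_def]; simp [hjp]; omega)
    have hjpS : jp ∈ S := by
      by_contra hc
      rw [if_neg hc] at hstep
      omega
    rw [if_pos hjpS] at hstep
    have hdes := hS hjpS
    rw [Des, Finset.mem_filter] at hdes
    obtain ⟨-, j2, hj2, hlt⟩ := hdes
    have hj2j : j2 = j := Fin.ext (by simp [hjp] at hj2; omega)
    rw [hj2j] at hlt
    rcases eq_or_lt_of_le hile with heq | hlt2
    · rw [heq]; exact hlt
    · exact lt_trans hlt (ih i jp rfl hlt2 (by omega))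

section Bij

open Function

/-- the sorting key -/
def key {m : ℕ} (f : Fin n → Fin m) : Fin n → ℕ ×ₗ ℕ :=
  fun w => toLex ((f w : ℕ), n - (w : ℕ))

lemma key_inj {m : ℕ} (f : Fin n → Fin m) : Injective (key f) := by
  intro a b hab
  have h2 : n - (a : ℕ) = n - (b : ℕ) := congrArg (fun p => (ofLex p).2) hab
  have ha := a.isLt
  have hb := b.isLt
  exact Fin.ext (by omega)

lemma strictMono_betaKey {π : Equiv.Perm (Fin n)} {S : Finset (Fin n)} (hS : S ⊆ Des π) :
    StrictMono (fun i => toLex ((beta S i, n - (π i : ℕ)) : ℕ × ℕ)) := by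
  intro i j hij
  rw [Prod.Lex.lt_iff]
  rcases eq_or_lt_of_le (beta_mono S (le_of_lt hij)) with heq | hlt
  · right
    refine ⟨heq, ?_⟩
    have hd := desc_chain hS (j : ℕ) i j rfl hij heq
    have h1 := Fin.lt_def.1 hd
    have h2 := (π i).isLt
    have h3 := (π j).isLt
    simp only [ofLex_toLex]
    omega
  · left
    exact hlt

set_option maxHeartbeats 2000000 in
lemma card_surj_eq (hn : 0 < n) {k : ℕ} (hk : k < n) :
    Nat.card {p : Equiv.Perm (Fin n) × Finset (Fin n) // p.2 ⊆ Des p.1 ∧ p.2.card = k}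
      = Nat.card {f : Fin n → Fin (n - k) // Surjective f} := by
  have hbound : ∀ (π : Equiv.Perm (Fin n)) (S : Finset (Fin n)), S ⊆ Des π → S.card = k →
      ∀ w : Fin n, beta S (π.symm w) < n - k := by
    intro π S hS hcard w
    have := beta_le S hn (hS.trans (Des_subset_Dset π)) (π.symm w)
    omega
  have hfsurj : ∀ (π : Equiv.Perm (Fin n)) (S : Finset (Fin n)) (hS : S ⊆ Des π)
      (hc : S.card = k), Surjective (fun w =>
        (⟨beta S (π.symm w), hbound π S hS hc w⟩ : Fin (n - k))) := by
    intro π S hS hc b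
    have hlast : beta S ⟨n - 1, by omega⟩ = (n - 1) - k := by
      rw [beta_last S hn (hS.trans (Des_subset_Dset π)) _ rfl, hc]
    have hble : (b : ℕ) ≤ beta S ⟨n - 1, by omega⟩ := by
      have := b.isLt
      omega
    obtain ⟨i', hi'⟩ := beta_reach S (n - 1) (by omega) (b : ℕ) hble
    refine ⟨π i', ?_⟩
    apply Fin.ext
    show beta S (π.symm (π i')) = (b : ℕ)
    rw [Equiv.symm_apply_apply]
    exact hi'
  apply Nat.card_eq_of_bijective (fun p =>
    ⟨fun w => (⟨beta p.1.2 (p.1.1.symm w), hbound p.1.1 p.1.2 p.2.1 p.2.2 w⟩ : Fin (n - k)),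
      hfsurj p.1.1 p.1.2 p.2.1 p.2.2⟩)
  constructor
  · rintro ⟨⟨π, S⟩, hS, hcard⟩ ⟨⟨π', S'⟩, hS', hcard'⟩ heq
    have h0 := congrArg Subtype.val heq
    simp only at h0
    have hval : ∀ w, beta S (π.symm w) = beta S' (π'.symm w) :=
      fun w => congrArg Fin.val (congrFun h0 w)
    -- the common function F
    set F : Fin n → Fin (n - k) :=
      fun w => (⟨beta S (π.symm w), hbound π S hS hcard w⟩ : Fin (n - k)) with hF
    have hFπ : ∀ i, (F (π i) : ℕ) = beta S i := by
      intro i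
      show beta S (π.symm (π i)) = beta S i
      rw [Equiv.symm_apply_apply]
    have hFπ' : ∀ i, (F (π' i) : ℕ) = beta S' i := by
      intro i
      have := hval (π' i)
      show beta S (π.symm (π' i)) = beta S' i
      rw [this, Equiv.symm_apply_apply]
    -- key F ∘ π is strictly monotone with range the image of key F
    have hu : (key F ∘ π) = fun i => toLex ((beta S i, n - (π i : ℕ)) : ℕ × ℕ) := by
      funext i
      show toLex ((F (π i) : ℕ), n - ((π i) : ℕ)) = _
      rw [hFπ i]
    have hu' : (key F ∘ π') = fun i => toLex ((beta S' i, n - (π' i : ℕ)) : ℕ × ℕ) := by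
      funext i
      show toLex ((F (π' i) : ℕ), n - ((π' i) : ℕ)) = _
      rw [hFπ' i]
    have hmono1 : StrictMono (key F ∘ π) := by rw [hu]; exact strictMono_betaKey hS
    have hmono2 : StrictMono (key F ∘ π') := by rw [hu']; exact strictMono_betaKey hS'
    set s : Finset (ℕ ×ₗ ℕ) := Finset.image (key F) univ with hs
    have hscard : s.card = n := by
      rw [hs, Finset.card_image_of_injective _ (key_inj F), Finset.card_univ,
        Fintype.card_fin]
    have hmem1 : ∀ x, (key F ∘ π) x ∈ s :=
      fun x => Finset.mem_image.2 ⟨π x, Finset.mem_univ _, rfl⟩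
    have hmem2 : ∀ x, (key F ∘ π') x ∈ s :=
      fun x => Finset.mem_image.2 ⟨π' x, Finset.mem_univ _, rfl⟩
    have he1 := Finset.orderEmbOfFin_unique hscard hmem1 hmono1
    have he2 := Finset.orderEmbOfFin_unique hscard hmem2 hmono2
    have hππ : ∀ w, π w = π' w := by
      intro w
      apply key_inj F
      exact (congrFun he1 w).trans (congrFun he2 w).symm
    have hπeq : π = π' := Equiv.ext hππ
    subst hπeq
    have hbb : ∀ i, beta S i = beta S' i := by
      intro i
      have := hval (π i)
      rwa [Equiv.symm_apply_apply] at this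
    have hSS : S = S' := by
      ext i
      by_cases hdi : i ∈ Des π
      · rw [Des, Finset.mem_filter] at hdi
        obtain ⟨-, j, hj, -⟩ := hdi
        have hs1 := beta_succ S (i := i) (j := j) hj
        have hs2 := beta_succ S' (i := i) (j := j) hj
        rw [hbb i, hbb j] at hs1
        constructor
        · intro hiS
          by_contra hiS'
          rw [if_pos hiS] at hs1
          rw [if_neg hiS'] at hs2
          omega
        · intro hiS'
          by_contra hiS
          rw [if_neg hiS] at hs1
          rw [if_pos hiS'] at hs2
          omega
      · constructor
        · intro h; exact absurd (hS h) hdi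
        · intro h; exact absurd (hS' h) hdi
    subst hSS
    rfl
  · rintro ⟨f, hf⟩
    obtain ⟨π, hmono⟩ : ∃ π : Equiv.Perm (Fin n), Monotone (key f ∘ π) :=
      ⟨Tuple.sort (key f), Tuple.monotone_sort (key f)⟩
    have hsm : StrictMono (key f ∘ π) :=
      hmono.strictMono_of_injective ((key_inj f).comp π.injective)
    have hvle : ∀ {a b : Fin n}, a ≤ b → (f (π a) : ℕ) ≤ (f (π b) : ℕ) := by
      intro a b hab
      have h1 := hmono hab
      rcases Prod.Lex.le_iff.1 h1 with hlt | ⟨heq, -⟩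
      · exact le_of_lt hlt
      · exact le_of_eq heq
    set S : Finset (Fin n) :=
      univ.filter (fun i => ∃ j : Fin n, (j : ℕ) = (i : ℕ) + 1 ∧ f (π j) = f (π i)) with hSdef
    have hmemS : ∀ i : Fin n,
        (i ∈ S ↔ ∃ j : Fin n, (j : ℕ) = (i : ℕ) + 1 ∧ f (π j) = f (π i)) := by
      intro i
      rw [hSdef, Finset.mem_filter]
      exact ⟨fun h => h.2, fun h => ⟨Finset.mem_univ _, h⟩⟩
    have hSDes : S ⊆ Des π := by
      intro i hi
      obtain ⟨j, hj, hfeq⟩ := (hmemS i).1 hi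
      have hij : i < j := Fin.lt_def.2 (by omega)
      have hk2 := hsm hij
      rcases Prod.Lex.lt_iff.1 hk2 with hlt | ⟨-, hsnd⟩
      · exact absurd (congrArg Fin.val hfeq) (by simp only [key, Function.comp_apply, ofLex_toLex] at hlt; omega)
      · rw [Des, Finset.mem_filter]
        refine ⟨Finset.mem_univ _, j, hj, ?_⟩
        have h2 := (π i).isLt
        have h3 := (π j).isLt
        simp only [key, Function.comp_apply, ofLex_toLex] at hsnd
        exact Fin.lt_def.2 (by omega)
    have hident : ∀ t, ∀ ht : t < n, (f (π ⟨t, ht⟩) : ℕ) = beta S ⟨t, ht⟩ := by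
      intro t
      induction t with
      | zero =>
        intro ht
        rw [beta_zero S _ rfl]
        obtain ⟨w, hw⟩ := hf ⟨0, by omega⟩
        have hle : (f (π ⟨0, ht⟩) : ℕ) ≤ (f (π (π.symm w)) : ℕ) :=
          hvle (by rw [Fin.le_def]; exact Nat.zero_le _)
        rw [Equiv.apply_symm_apply, hw] at hle
        simpa using hle
      | succ t ih =>
        intro ht
        have ht' : t < n := by omega
        have hih := ih ht'
        have hstep := beta_succ S (i := ⟨t, ht'⟩) (j := ⟨t + 1, ht⟩)
          (by show t + 1 = t + 1; rfl)
        by_cases hpS : (⟨t, ht'⟩ : Fin n) ∈ S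
        · rw [if_pos hpS, add_zero] at hstep
          obtain ⟨j, hj, hfeq⟩ := (hmemS _).1 hpS
          have hjj : j = ⟨t + 1, ht⟩ := Fin.ext (by simpa using hj)
          rw [hjj] at hfeq
          rw [hstep, ← hih, congrArg Fin.val hfeq]
        · rw [if_neg hpS] at hstep
          have hne : f (π ⟨t + 1, ht⟩) ≠ f (π ⟨t, ht'⟩) := by
            intro hE
            exact hpS ((hmemS _).2 ⟨⟨t + 1, ht⟩, by simp, hE⟩)
          have hlef : (f (π ⟨t, ht'⟩) : ℕ) ≤ (f (π ⟨t + 1, ht⟩) : ℕ) :=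
            hvle (Fin.mk_le_mk.2 (Nat.le_succ t))
          have hltf : (f (π ⟨t, ht'⟩) : ℕ) < (f (π ⟨t + 1, ht⟩) : ℕ) := by
            rcases eq_or_lt_of_le hlef with heqv | h
            · exact absurd (Fin.ext heqv.symm) hne
            · exact h
          have hnoskip : (f (π ⟨t + 1, ht⟩) : ℕ) ≤ (f (π ⟨t, ht'⟩) : ℕ) + 1 := by
            by_contra hcon
            push_neg at hcon
            have hvlt : (f (π ⟨t, ht'⟩) : ℕ) + 1 < n - k := by
              have := (f (π ⟨t + 1, ht⟩)).isLt
              omega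
            obtain ⟨w, hw⟩ := hf ⟨(f (π ⟨t, ht'⟩) : ℕ) + 1, hvlt⟩
            have hwv : (f (π (π.symm w)) : ℕ) = (f (π ⟨t, ht'⟩) : ℕ) + 1 := by
              rw [Equiv.apply_symm_apply, hw]
            rcases le_or_gt (π.symm w) ⟨t, ht'⟩ with hle2 | hgt2
            · have := hvle hle2
              omega
            · have hle3 : (⟨t + 1, ht⟩ : Fin n) ≤ π.symm w := by
                rw [Fin.le_def]
                have := Fin.lt_def.1 hgt2
                simp at this ⊢
                omega
              have := hvle hle3
              omega
          rw [hstep, ← hih]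
          omega
    have hidentF : ∀ i : Fin n, (f (π i) : ℕ) = beta S i := by
      rintro ⟨t, ht⟩
      exact hident t ht
    have hSsub : S ⊆ Dset n := hSDes.trans (Des_subset_Dset π)
    have hcardS : S.card = k := by
      have hlt1 : n - 1 < n := by omega
      set ilast : Fin n := ⟨n - 1, hlt1⟩ with hilast
      have h1 : beta S ilast = (n - 1) - S.card := beta_last S hn hSsub ilast rfl
      have h2 : (f (π ilast) : ℕ) = (n - 1) - S.card := by
        rw [hidentF]; exact h1
      have h3 : (f (π ilast) : ℕ) = n - k - 1 := by
        obtain ⟨w, hw⟩ := hf ⟨n - k - 1, by omega⟩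
        have hle4 : (f (π (π.symm w)) : ℕ) ≤ (f (π ilast) : ℕ) := by
          apply hvle
          rw [Fin.le_def, hilast]
          have := (π.symm w).isLt
          simp only [Fin.val_mk]
          omega
        rw [Equiv.apply_symm_apply, hw] at hle4
        have h5 := (f (π ilast)).isLt
        simp only [Fin.val_mk] at hle4
        omega
      have h4 : S.card ≤ n - 1 := by
        have h6 := Finset.card_le_card hSsub
        rwa [card_Dset hn] at h6
      omega
    refine ⟨⟨⟨π, S⟩, hSDes, hcardS⟩, ?_⟩
    apply Subtype.ext
    funext w
    apply Fin.ext
    show beta S (π.symm w) = (f w : ℕ)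
    have := hidentF (π.symm w)
    rw [Equiv.apply_symm_apply] at this
    exact this.symm

end Bij

lemma card_pairs (k : ℕ) :
    Nat.card {p : Equiv.Perm (Fin n) × Finset (Fin n) // p.2 ⊆ Des p.1 ∧ p.2.card = k}
      = ∑ π : Equiv.Perm (Fin n), (Des π).card.choose k := by
  have e : {p : Equiv.Perm (Fin n) × Finset (Fin n) // p.2 ⊆ Des p.1 ∧ p.2.card = k}
      ≃ Σ π : Equiv.Perm (Fin n), {S // S ∈ (Des π).powersetCard k} :=
    { toFun := fun p => ⟨p.1.1, p.1.2, Finset.mem_powersetCard.2 p.2⟩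
      invFun := fun q => ⟨(q.1, q.2.1), Finset.mem_powersetCard.1 q.2.2⟩
      left_inv := fun p => rfl
      right_inv := fun q => rfl }
  rw [Nat.card_congr e, Nat.card_eq_fintype_card, Fintype.card_sigma]
  apply Finset.sum_congr rfl
  intro π _
  rw [Fintype.card_coe, Finset.card_powersetCard]

lemma card_Des_le (hn : 0 < n) (π : Equiv.Perm (Fin n)) : (Des π).card ≤ n - 1 := by
  have h := Finset.card_le_card (Des_subset_Dset π)
  rwa [card_Dset hn] at h

end ZC


/-- The `f`-polynomial of the permutohedron `Z_{K_n}` is `A_n(q+1)`, where `A_n` is the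
Eulerian polynomial. -/
theorem fPolynomial_graphicalZonotope_completeGraph (n : ℕ) (hn : 1 ≤ n) :
    ∑ k ∈ Finset.range n, (faceCount (⊤ : SimpleGraph (Fin n)) k : Polynomial ℤ) * X ^ k
      = ∑ π : Equiv.Perm (Fin n), (X + 1) ^ descentCount n π := by
  have hn0 : 0 < n := hn
  have hstep : ∀ k ∈ Finset.range n,
      (faceCount (⊤ : SimpleGraph (Fin n)) k : Polynomial ℤ) * X ^ k
        = ∑ π : Equiv.Perm (Fin n), ((ZC.Des π).card.choose k : Polynomial ℤ) * X ^ k := by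
    intro k hk
    rw [Finset.mem_range] at hk
    have h1 : faceCount (⊤ : SimpleGraph (Fin n)) k
        = ∑ π : Equiv.Perm (Fin n), (ZC.Des π).card.choose k := by
      have h0 : faceCount (⊤ : SimpleGraph (Fin n)) k
          = Nat.card { F : Set (Fin n → ℝ) // F.Nonempty ∧
              IsExposed ℝ (graphicalZonotope (⊤ : SimpleGraph (Fin n))) F ∧
              Module.finrank ℝ (affineSpan ℝ F).direction = k } := rfl
      rw [h0, ZG.faceCount_subtype_eq hk, ← ZC.card_surj_eq hn0 hk, ZC.card_pairs]
    rw [h1]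
    push_cast
    rw [Finset.sum_mul]
  rw [Finset.sum_congr rfl hstep, Finset.sum_comm]
  apply Finset.sum_congr rfl
  intro π _
  have hd : descentCount n π = (ZC.Des π).card := rfl
  rw [hd]
  have hdn : (ZC.Des π).card + 1 ≤ n := by
    have := ZC.card_Des_le hn0 π
    omega
  rw [add_pow]
  simp only [one_pow, mul_one]
  rw [← Finset.sum_subset (Finset.range_subset_range.2 hdn) (fun k _ hk2 => ?_)]
  · apply Finset.sum_congr rfl
    intro k _
    ring
  · rw [Finset.mem_range, not_lt] at hk2
    rw [Nat.choose_eq_zero_of_lt (by omega), Nat.cast_zero, zero_mul]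
end
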